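/- arXiv:1502.05150 — 10 statements merged into one kernel-verified Lean document; each statement's English description precedes it below -/
import Mathlib

section
/- Let A(z) = Σ_{i≥0} (6i)!/((3i)!(2i)!) (z/288)^i and B(z) = Σ_{i≥0} ((6i)!/((3i)!(2i)!))·((6i+1)/(6i−1)) (z/288)^i, viewed as formal power series over ℚ. Then 3z²·(dA/dz) + (z/2 − 1)·A = B in ℚ[[z]]. -/
/-!
Write `a n` for the `n`-th coefficient of `A`. Cancelling factorials gives the first-order
recurrence `24 (n + 1) a (n + 1) = (6n + 1)(6n + 5) a n`, and `b n = (6n + 1)/(6n - 1) · a n`.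
Comparing coefficients of `z^(n+1)`, the equation asks for
`(3n + 1/2) a n - a (n + 1) = (6n + 7)/(6n + 5) · a (n + 1)`, which is that recurrence;
the constant terms are both `-1`.
-/

open PowerSeries

/-- The hypergeometric series `A(z) = Σ_{i≥0} (6i)!/((3i)!(2i)!) (z/288)^i`. -/
noncomputable def seriesA : PowerSeries ℚ :=
  PowerSeries.mk fun i => ((6 * i).factorial : ℚ) / ((3 * i).factorial * (2 * i).factorial) *
    (1 / 288) ^ i

/-- The hypergeometric series
`B(z) = Σ_{i≥0} (6i)!/((3i)!(2i)!) · (6i+1)/(6i−1) · (z/288)^i`. -/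
noncomputable def seriesB : PowerSeries ℚ :=
  PowerSeries.mk fun i => ((6 * i).factorial : ℚ) / ((3 * i).factorial * (2 * i).factorial) *
    ((6 * (i : ℚ) + 1) / (6 * (i : ℚ) - 1)) * (1 / 288) ^ i

open scoped Nat

theorem Nat.succ_mul_factorial_six_mul_succ (n : ℕ) :
    (n + 1) * (6 * (n + 1))! * (3 * n)! * (2 * n)! =
      12 * (6 * n + 1) * (6 * n + 5) * (6 * n)! * (3 * (n + 1))! * (2 * (n + 1))! := by
  rw [show 6 * (n + 1) = 6 * n + 6 by ring, show 3 * (n + 1) = 3 * n + 3 by ring,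
    show 2 * (n + 1) = 2 * n + 2 by ring]
  simp only [Nat.factorial_succ]
  ring

theorem PowerSeries.coeff_succ_X_sq_mul_derivative {R : Type*} [CommSemiring R] (f : R⟦X⟧)
    (n : ℕ) : coeff (n + 1) (X ^ 2 * derivative R f) = n * coeff n f := by
  rcases n with _ | n
  · simp [coeff_X_pow_mul']
  · rw [coeff_X_pow_mul', if_pos (by omega), show n + 1 + 1 - 2 = n by omega, coeff_derivative]
    push_cast
    ring

theorem coeff_succ_ode_lhs (f : ℚ⟦X⟧) (n : ℕ) :
    coeff (n + 1) (3 * X ^ 2 * derivative ℚ f + (C (1 / 2 : ℚ) * X - 1) * f) =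
      (3 * n + 1 / 2) * coeff n f - coeff (n + 1) f := by
  rw [mul_assoc, ← map_ofNat C 3, map_add, coeff_C_mul, coeff_succ_X_sq_mul_derivative,
    sub_mul, map_sub, mul_assoc, coeff_C_mul, coeff_succ_X_mul, one_mul]
  ring

theorem coeff_seriesA_succ (n : ℕ) :
    24 * (n + 1) * coeff (n + 1) seriesA = (6 * n + 1) * (6 * n + 5) * coeff n seriesA := by
  have h := congrArg (Nat.cast (R := ℚ)) (Nat.succ_mul_factorial_six_mul_succ n)
  push_cast at h
  simp only [seriesA, coeff_mk, pow_succ]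
  field_simp
  linear_combination 24 * h

theorem coeff_seriesB (n : ℕ) :
    coeff n seriesB = (6 * n + 1) / (6 * n - 1) * coeff n seriesA := by
  simp only [seriesA, seriesB, coeff_mk]
  ring

theorem FZ_first_order_ODE :
    3 * X ^ 2 * (PowerSeries.derivative ℚ seriesA) +
      (C (1 / 2 : ℚ) * X - 1) * seriesA = seriesB := by
  ext n
  rcases n with _ | n
  · simp [seriesA, seriesB]
  · rw [coeff_succ_ode_lhs, coeff_seriesB]
    push_cast
    have hden : (6 * ((n : ℚ) + 1) - 1) ≠ 0 := by linarith [n.cast_nonneg (α := ℚ)]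
    field_simp
    linear_combination -coeff_seriesA_succ n
end

section
/- Let H₀(T) = Σ_{i≥0} (6i)!/((2i)!(3i)!) (−T)^i and H₁(T) = −Σ_{i≥0} ((6i)!/((2i)!(3i)!))·((6i+1)/(6i−1)) (−T)^i as formal power series over ℚ. Then H₀(T)·H₁(−T) + H₀(−T)·H₁(T) = 2 in ℚ[[T]]. -/
/-!
Write `H₀(T) = Σ aᵢ (−T)ⁱ` and `H₁(T) = −Σ bᵢ (−T)ⁱ` with `bᵢ = aᵢ (6i+1)/(6i−1)`.
Since `T ↦ −T` is an involutive ring automorphism exchanging the two products, the coefficient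
of `Tⁿ` on the left is `0` for odd `n` and twice that of `H₀(T) H₁(−T)`, namely
`−2 Σ_{i+j=n} (−1)ⁱ aᵢ bⱼ`, for even `n`. For even `n > 0` this sum is half of its
symmetrisation `Σ_{i+j=n} (−1)ⁱ (aᵢ bⱼ + bᵢ aⱼ)`, which vanishes because it telescopes along the
antidiagonal: with `w(i, j) = 2i(6j+1) aᵢ aⱼ / ((i+j)(6i−1))` one has
`aᵢ b_{j+1} + bᵢ a_{j+1} = w(i, j+1) + w(i+1, j)`, an identity of rational functions in `i, j`
once `a_{k+1} / a_k = 12(6k+1)(6k+5)/(k+1)` is used.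
-/

open PowerSeries

/-- `H₀(T) = Σ_{i≥0} (6i)!/((2i)!(3i)!) (−T)^i`. -/
noncomputable def seriesH0 : PowerSeries ℚ :=
  PowerSeries.mk fun i =>
    ((6 * i).factorial : ℚ) / ((2 * i).factorial * (3 * i).factorial) * (-1) ^ i

/-- `H₁(T) = −Σ_{i≥0} (6i)!/((2i)!(3i)!) · (6i+1)/(6i−1) · (−T)^i`. -/
noncomputable def seriesH1 : PowerSeries ℚ :=
  PowerSeries.mk fun i =>
    -(((6 * i).factorial : ℚ) / ((2 * i).factorial * (3 * i).factorial) *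
      ((6 * (i : ℚ) + 1) / (6 * (i : ℚ) - 1)) * (-1) ^ i)

open Finset

section RescaleNegOne

variable {R : Type*} [CommRing R]

theorem rescale_neg_one_rescale_neg_one (f : R⟦X⟧) : rescale (-1) (rescale (-1) f) = f := by
  rw [rescale_rescale, neg_one_mul, neg_neg, rescale_one, RingHom.id_apply]

theorem coeff_add_rescale_neg_one (f : R⟦X⟧) (n : ℕ) :
    coeff n (f + rescale (-1) f) = if Even n then 2 * coeff n f else 0 := by
  rw [map_add, coeff_rescale]
  rcases n.even_or_odd with h | h
  · rw [if_pos h, h.neg_one_pow]; ring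
  · rw [if_neg (Nat.not_even_iff_odd.mpr h), h.neg_one_pow]; ring

end RescaleNegOne

theorem Finset.Nat.sum_antidiagonal_neg_one_pow_mul_eq_zero {M : Type*} [CommRing M]
    {c w : ℕ → ℕ → M} (hc : ∀ i j, c i (j + 1) = w i (j + 1) + w (i + 1) j)
    (hc₀ : ∀ i, c (i + 1) 0 = w (i + 1) 0) (hw₀ : ∀ j, w 0 j = 0) (m : ℕ) :
    ∑ p ∈ antidiagonal (m + 1), (-1) ^ p.1 * c p.1 p.2 = 0 := by
  have hw : ∑ p ∈ antidiagonal (m + 1), (-1) ^ p.1 * w p.1 p.2 =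
      (-1) ^ (m + 1) * w (m + 1) 0 + ∑ p ∈ antidiagonal m, (-1) ^ p.1 * w p.1 (p.2 + 1) :=
    Nat.sum_antidiagonal_succ'
  have hw' : ∑ p ∈ antidiagonal (m + 1), (-1) ^ p.1 * w p.1 p.2 =
      -∑ p ∈ antidiagonal m, (-1) ^ p.1 * w (p.1 + 1) p.2 := by
    simp [Nat.sum_antidiagonal_succ, hw₀, pow_succ]
  rw [Nat.sum_antidiagonal_succ', hc₀]
  simp only [hc, mul_add, sum_add_distrib]
  linear_combination hw' - hw

noncomputable def h0Coeff (i : ℕ) : ℚ :=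
  ((6 * i).factorial : ℚ) / ((2 * i).factorial * (3 * i).factorial)

noncomputable def h1Coeff (i : ℕ) : ℚ :=
  h0Coeff i * ((6 * (i : ℚ) + 1) / (6 * (i : ℚ) - 1))

theorem h0Coeff_succ (k : ℕ) :
    h0Coeff (k + 1) = h0Coeff k * (12 * (6 * k + 1) * (6 * k + 5)) / (k + 1) := by
  rw [h0Coeff, h0Coeff, show 6 * (k + 1) = 6 * k + 5 + 1 by ring,
    show 2 * (k + 1) = 2 * k + 1 + 1 by ring, show 3 * (k + 1) = 3 * k + 2 + 1 by ring]
  simp only [Nat.factorial_succ]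
  push_cast
  field_simp
  ring

theorem six_mul_sub_one_ne_zero (k : ℕ) : 6 * (k : ℚ) - 1 ≠ 0 :=
  sub_ne_zero.mpr (by exact_mod_cast (by omega : 6 * k ≠ 1))

noncomputable def wzCertificate (i j : ℕ) : ℚ :=
  2 * i * (6 * j + 1) * h0Coeff i * h0Coeff j / ((i + j) * (6 * i - 1))

theorem h0Coeff_mul_h1Coeff_add_eq_wzCertificate (i j : ℕ) :
    h0Coeff i * h1Coeff (j + 1) + h1Coeff i * h0Coeff (j + 1) =
      wzCertificate i (j + 1) + wzCertificate (i + 1) j := by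
  have hi := six_mul_sub_one_ne_zero i
  have hi' := six_mul_sub_one_ne_zero (i + 1)
  have hj := six_mul_sub_one_ne_zero (j + 1)
  simp only [h1Coeff, wzCertificate, h0Coeff_succ]
  push_cast at *
  field_simp
  ring

theorem sum_antidiagonal_neg_one_pow_mul_h0Coeff_mul_h1Coeff_symm {n : ℕ} (hn : n ≠ 0) :
    ∑ p ∈ antidiagonal n,
      (-1) ^ p.1 * (h0Coeff p.1 * h1Coeff p.2 + h1Coeff p.1 * h0Coeff p.2) = 0 := by
  obtain ⟨m, rfl⟩ := Nat.exists_eq_succ_of_ne_zero hn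
  refine Nat.sum_antidiagonal_neg_one_pow_mul_eq_zero
    (c := fun i j => h0Coeff i * h1Coeff j + h1Coeff i * h0Coeff j)
    h0Coeff_mul_h1Coeff_add_eq_wzCertificate (fun i => ?_) (fun j => by simp [wzCertificate]) m
  have := six_mul_sub_one_ne_zero (i + 1)
  simp only [h1Coeff, wzCertificate, h0Coeff]
  push_cast at *
  field_simp
  ring

theorem sum_antidiagonal_neg_one_pow_mul_h0Coeff_mul_h1Coeff {n : ℕ} (hn : n ≠ 0)
    (he : Even n) : ∑ p ∈ antidiagonal n, (-1) ^ p.1 * (h0Coeff p.1 * h1Coeff p.2) = 0 := by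
  have hswap : ∑ p ∈ antidiagonal n, (-1) ^ p.1 * (h1Coeff p.1 * h0Coeff p.2) =
      ∑ p ∈ antidiagonal n, (-1) ^ p.1 * (h0Coeff p.1 * h1Coeff p.2) := by
    rw [← Nat.sum_antidiagonal_swap]
    refine sum_congr rfl fun p hp => ?_
    have hpar : (-1 : ℚ) ^ p.2 = (-1) ^ p.1 :=
      neg_one_pow_congr (Nat.even_add.mp (mem_antidiagonal.mp hp ▸ he)).symm
    simp only [Prod.fst_swap, Prod.snd_swap, hpar]
    ring
  have hsymm := sum_antidiagonal_neg_one_pow_mul_h0Coeff_mul_h1Coeff_symm hn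
  simp only [mul_add, sum_add_distrib, hswap] at hsymm
  linear_combination hsymm / 2

theorem coeff_seriesH0_mul_rescale_seriesH1 (n : ℕ) :
    coeff n (seriesH0 * rescale (-1) seriesH1) =
      -∑ p ∈ antidiagonal n, (-1) ^ p.1 * (h0Coeff p.1 * h1Coeff p.2) := by
  rw [coeff_mul, ← sum_neg_distrib]
  refine sum_congr rfl fun p _ => ?_
  have hsq : (-1 : ℚ) ^ p.2 * (-1) ^ p.2 = 1 := by rw [← mul_pow]; norm_num
  rw [show seriesH0 = mk fun i => h0Coeff i * (-1) ^ i from rfl,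
    show seriesH1 = mk fun i => -(h1Coeff i * (-1) ^ i) from rfl, coeff_rescale, coeff_mk,
    coeff_mk]
  linear_combination (-(-1) ^ p.1 * h0Coeff p.1 * h1Coeff p.2) * hsq

theorem H0_H1_identity :
    seriesH0 * (rescale (-1) seriesH1) + (rescale (-1) seriesH0) * seriesH1 = 2 := by
  have hswap : rescale (-1) seriesH0 * seriesH1 =
      rescale (-1) (seriesH0 * rescale (-1) seriesH1) := by
    rw [map_mul, rescale_neg_one_rescale_neg_one]
  ext n
  rw [hswap, coeff_add_rescale_neg_one, coeff_seriesH0_mul_rescale_seriesH1, ← map_ofNat C 2,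
    coeff_C]
  rcases eq_or_ne n 0 with rfl | hn
  · simp [h1Coeff, h0Coeff]
  · rw [if_neg hn]
    split_ifs with he
    · rw [sum_antidiagonal_neg_one_pow_mul_h0Coeff_mul_h1Coeff hn he, neg_zero, mul_zero]
    · rfl
end

section
/- For every real number x, the improper integral defining the Airy function converges: the limit as R → ∞ of ∫₀^R cos(t³/3 + x·t) dt exists in ℝ. -/
/-!
On `[a, ∞)` with `a = |x| + 1` the phase `φ t = t ^ 3 / 3 + x * t` has `φ' t = t ^ 2 + x > 0`,
increasing to `∞`. Writing `cos φ = (sin φ)' * (1 / φ')` and integrating by parts (Dirichlet's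
test), the boundary term `sin φ / φ'` tends to `0` and the remaining integrand `sin φ * (1 / φ')'`
is absolutely integrable, because `1 / φ'` is monotone with a limit.
-/

open Filter intervalIntegral MeasureTheory Set Topology

theorem exists_tendsto_intervalIntegral_mul_of_bounded_antideriv
    {F f g g' : ℝ → ℝ} {a C : ℝ}
    (hF : ∀ t ∈ Ici a, HasDerivAt F (f t) t) (hf : ∀ b ∈ Ici a, IntervalIntegrable f volume a b)
    (hg : ∀ t ∈ Ici a, HasDerivAt g (g' t) t) (hg' : IntegrableOn g' (Ioi a))
    (hFC : ∀ t ∈ Ici a, |F t| ≤ C) (hg0 : Tendsto g atTop (𝓝 0)) :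
    ∃ L, Tendsto (fun R => ∫ t in a..R, f t * g t) atTop (𝓝 L) := by
  have hFcont : ContinuousOn F (Ici a) := fun t ht => (hF t ht).continuousAt.continuousWithinAt
  have hg'F : IntegrableOn (fun t => g' t * F t) (Ioi a) :=
    hg'.mul_bdd (hFcont.mono Ioi_subset_Ici_self |>.aestronglyMeasurable measurableSet_Ioi)
      ((ae_restrict_iff' measurableSet_Ioi).2 (.of_forall fun t ht => hFC t (mem_Ici_of_Ioi ht)))
  have hgF : Tendsto (fun R => g R * F R) atTop (𝓝 0) :=
    hg0.zero_mul_isBoundedUnder_le <| isBoundedUnder_of_eventually_le (a := C) <|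
      eventually_map.2 <| (eventually_ge_atTop a).mono fun t ht => hFC t ht
  refine ⟨0 - g a * F a - ∫ t in Ioi a, g' t * F t,
    ((hgF.sub_const _).sub (intervalIntegral_tendsto_integral_Ioi a hg'F tendsto_id)).congr' ?_⟩
  filter_upwards [eventually_ge_atTop a] with R hR
  have hsub : uIcc a R ⊆ Ici a := ordConnected_Ici.uIcc_subset self_mem_Ici hR
  simp_rw [mul_comm (f _)]
  exact (integral_mul_deriv_eq_deriv_mul (fun t ht => hg t (hsub ht))
    (fun t ht => hF t (hsub ht))
    ((intervalIntegrable_iff_integrableOn_Ioc_of_le hR).2 (hg'.mono_set Ioc_subset_Ioi_self))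
    (hf R hR)).symm

theorem exists_tendsto_intervalIntegral_cos_of_deriv_tendsto_atTop
    {φ φ' φ'' : ℝ → ℝ} {a : ℝ}
    (hφ : ∀ t ∈ Ici a, HasDerivAt φ (φ' t) t) (hφ' : ∀ t ∈ Ici a, HasDerivAt φ' (φ'' t) t)
    (hφ'_pos : ∀ t ∈ Ici a, 0 < φ' t) (hφ''_nonneg : ∀ t ∈ Ioi a, 0 ≤ φ'' t)
    (hφ'_top : Tendsto φ' atTop atTop) :
    ∃ L, Tendsto (fun R => ∫ t in a..R, Real.cos (φ t)) atTop (𝓝 L) := by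
  have hinv : ∀ t ∈ Ici a, HasDerivAt (fun s => (φ' s)⁻¹) (-φ'' t / φ' t ^ 2) t :=
    fun t ht => (hφ' t ht).inv (hφ'_pos t ht).ne'
  have hinv0 : Tendsto (fun s => (φ' s)⁻¹) atTop (𝓝 0) := hφ'_top.inv_tendsto_atTop
  have hcos : ContinuousOn (fun t => Real.cos (φ t) * φ' t) (Ici a) := fun t ht =>
    ((Real.continuous_cos.continuousAt.comp (hφ t ht).continuousAt).mul
      (hφ' t ht).continuousAt).continuousWithinAt
  obtain ⟨L, hL⟩ := exists_tendsto_intervalIntegral_mul_of_bounded_antideriv (C := 1)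
    (fun t ht => (hφ t ht).sin)
    (fun b hb => (hcos.mono (ordConnected_Ici.uIcc_subset self_mem_Ici hb)).intervalIntegrable)
    hinv
    (integrableOn_Ioi_deriv_of_nonpos' hinv
      (fun t ht => div_nonpos_of_nonpos_of_nonneg (neg_nonpos.2 (hφ''_nonneg t ht)) (sq_nonneg _))
      hinv0)
    (fun t _ => Real.abs_sin_le_one _) hinv0
  refine ⟨L, hL.congr' ?_⟩
  filter_upwards [eventually_ge_atTop a] with R hR
  refine integral_congr fun t ht => ?_
  field_simp [(hφ'_pos t (ordConnected_Ici.uIcc_subset self_mem_Ici hR ht)).ne']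

theorem exists_tendsto_intervalIntegral_of_lower_limit {f : ℝ → ℝ}
    (hf : LocallyIntegrable f) {a : ℝ} (b : ℝ)
    (h : ∃ L, Tendsto (fun R => ∫ t in a..R, f t) atTop (𝓝 L)) :
    ∃ L, Tendsto (fun R => ∫ t in b..R, f t) atTop (𝓝 L) := by
  obtain ⟨L, hL⟩ := h
  exact ⟨(∫ t in b..a, f t) + L, (hL.const_add _).congr fun R =>
    integral_add_adjacent_intervals (hf.integrableOn_isCompact isCompact_uIcc).intervalIntegrable
      (hf.integrableOn_isCompact isCompact_uIcc).intervalIntegrable⟩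

theorem airy_integral_converges (x : ℝ) :
    ∃ L : ℝ, Tendsto (fun R : ℝ => ∫ t in (0:ℝ)..R, Real.cos (t ^ 3 / 3 + x * t))
      atTop (nhds L) := by
  have hphase (t : ℝ) : HasDerivAt (fun t => t ^ 3 / 3 + x * t) (t ^ 2 + x) t :=
    (((hasDerivAt_pow 3 t).div_const 3).add ((hasDerivAt_id' t).const_mul x)).congr_deriv
      (by ring)
  have hfreq (t : ℝ) : HasDerivAt (fun t => t ^ 2 + x) (2 * t) t := by
    simpa using (hasDerivAt_pow 2 t).add_const x
  have hfreq_pos (t : ℝ) (ht : t ∈ Ici (|x| + 1)) : 0 < t ^ 2 + x := by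
    have h1 : |x| + 1 ≤ t := ht
    nlinarith [neg_abs_le x, abs_nonneg x]
  have hfreq_deriv_nonneg (t : ℝ) (ht : t ∈ Ioi (|x| + 1)) : 0 ≤ 2 * t :=
    mul_nonneg zero_le_two ((by positivity : (0 : ℝ) ≤ |x| + 1).trans ht.out.le)
  have hfreq_top : Tendsto (fun t : ℝ => t ^ 2 + x) atTop atTop :=
    tendsto_atTop_add_const_right _ x (tendsto_pow_atTop two_ne_zero)
  have hcos : Continuous fun t : ℝ => Real.cos (t ^ 3 / 3 + x * t) := by fun_prop
  exact exists_tendsto_intervalIntegral_of_lower_limit hcos.locallyIntegrable 0 <|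
    exists_tendsto_intervalIntegral_cos_of_deriv_tendsto_atTop (fun t _ => hphase t)
      (fun t _ => hfreq t) hfreq_pos hfreq_deriv_nonneg hfreq_top
end

section
/- Define Ai : ℝ → ℝ by Ai(x) = lim_{R→∞} ∫₀^R cos(t³/3 + x·t) dt. Then Ai is twice differentiable on ℝ and satisfies the Airy differential equation Ai''(x) = x·Ai(x) for all real x. -/
/-!
Write `φₓ(t) = t³/3 + xt`, so that `∂ₜ sin φₓ = (t² + x) cos φₓ` with `t² + x ≥ t²/2` once
`t² ≥ 2|x|`. Integrating by parts against this derivative, with the nonnegative antitone weights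
`1/(t² + x)` and `t/(t² + x)`, bounds `∫ₐᵇ cos φₓ` by `4/a²` and `∫ₐᵇ t sin φₓ` by `4/a`, uniformly
for `x` in a ball. Hence the truncated integrals `∫₀ᴿ cos φₓ` and their `x`-derivatives
`-∫₀ᴿ t sin φₓ` converge locally uniformly, and `Ai' = -∫₀^∞ t sin φₓ`. Differentiating once more,
`-∫₀ᴿ t² cos φₓ = x ∫₀ᴿ cos φₓ - sin φₓ(R)`. The boundary term has no limit, but it is the
`x`-derivative of `-cos φₓ(R) / R → 0`; subtracting that from `-∫₀ᴿ t sin φₓ` leaves functions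
with the same limit whose derivatives `x ∫₀ᴿ cos φₓ` converge locally uniformly to `x Ai(x)`.
-/

open Filter intervalIntegral

/-- The Airy function, defined as the improper integral
`Ai(x) = lim_{R→∞} ∫₀^R cos(t³/3 + xt) dt`. -/
noncomputable def Ai (x : ℝ) : ℝ :=
  limUnder atTop (fun R : ℝ => ∫ t in (0:ℝ)..R, Real.cos (t ^ 3 / 3 + x * t))

open Topology MeasureTheory Set

theorem abs_integral_mul_deriv_le_of_antitone {a b : ℝ} {g g' v v' : ℝ → ℝ} (hab : a ≤ b)
    (hg : ∀ t ∈ Icc a b, HasDerivAt g (g' t) t) (hg' : ∀ t ∈ Icc a b, g' t ≤ 0)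
    (hg'_int : IntervalIntegrable g' volume a b) (hgb : 0 ≤ g b)
    (hv : ∀ t ∈ Icc a b, HasDerivAt v (v' t) t) (hv'_int : IntervalIntegrable v' volume a b)
    (hv_le : ∀ t ∈ Icc a b, |v t| ≤ 1) :
    |∫ t in a..b, g t * v' t| ≤ 2 * g a := by
  rw [← uIcc_of_le hab] at hg hv
  have hgab : g b - g a = ∫ t in a..b, g' t := (integral_eq_sub_of_hasDerivAt hg hg'_int).symm
  have hrest : |∫ t in a..b, g' t * v t| ≤ g a - g b := by
    have := norm_integral_le_of_norm_le hab (g := fun t => -g' t) (f := fun t => g' t * v t)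
      (ae_of_all _ fun t ht => ?_) hg'_int.neg
    · rw [intervalIntegral.integral_neg, ← hgab, neg_sub] at this
      exact this
    · have ht : t ∈ Icc a b := Ioc_subset_Icc_self ht
      rw [Real.norm_eq_abs, abs_mul, abs_of_nonpos (hg' t ht)]
      exact mul_le_of_le_one_right (neg_nonneg.mpr (hg' t ht)) (hv_le t ht)
  have hga : 0 ≤ g a := by linarith [abs_nonneg (∫ t in a..b, g' t * v t)]
  have hboundary : ∀ t ∈ Icc a b, 0 ≤ g t → |g t * v t| ≤ g t := fun t ht hgt => by
    rw [abs_mul, abs_of_nonneg hgt]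
    exact mul_le_of_le_one_right hgt (hv_le t ht)
  have hb := hboundary b (right_mem_Icc.mpr hab) hgb
  have ha := hboundary a (left_mem_Icc.mpr hab) hga
  rw [integral_mul_deriv_eq_deriv_mul hg hv hg'_int hv'_int]
  rw [abs_le] at hrest hb ha ⊢
  constructor <;> linarith

theorem uniformCauchySeqOn_of_dist_le {ι α β : Type*} [SemilatticeSup ι] [Nonempty ι]
    [PseudoMetricSpace β] {f : ι → α → β} {s : Set α} {δ : ι → ℝ} (hδ : Tendsto δ atTop (𝓝 0))
    (h : ∀ᶠ a in atTop, ∀ b ≥ a, ∀ x ∈ s, dist (f b x) (f a x) ≤ δ a) :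
    UniformCauchySeqOn f atTop s := by
  rw [Metric.uniformCauchySeqOn_iff]
  intro ε hε
  obtain ⟨N, hN, hδN⟩ := (h.and (hδ.eventually (gt_mem_nhds (half_pos hε)))).exists
  refine ⟨N, fun m hm n hn x hx => ?_⟩
  calc dist (f m x) (f n x) ≤ dist (f m x) (f N x) + dist (f n x) (f N x) :=
        dist_triangle_right _ _ _
    _ ≤ δ N + δ N := add_le_add (hN m hm x hx) (hN n hn x hx)
    _ < ε := by linarith

theorem UniformCauchySeqOn.tendstoUniformlyOn_limUnder {ι α β : Type*} [SemilatticeSup ι]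
    [Nonempty ι] [UniformSpace β] [CompleteSpace β] [Nonempty β] {f : ι → α → β} {s : Set α}
    (h : UniformCauchySeqOn f atTop s) :
    TendstoUniformlyOn f (fun x => limUnder atTop (f · x)) atTop s :=
  h.tendstoUniformlyOn_of_tendsto fun _ hx => (h.cauchySeq hx).tendsto_limUnder

theorem TendstoUniformlyOn.mul_left_of_abs_le {ι α : Type*} {l : Filter ι} {s : Set α}
    {f : ι → α → ℝ} {g c : α → ℝ} {C : ℝ} (h : TendstoUniformlyOn f g l s)
    (hc : ∀ x ∈ s, |c x| ≤ C) :
    TendstoUniformlyOn (fun n x => c x * f n x) (fun x => c x * g x) l s := by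
  rw [Metric.tendstoUniformlyOn_iff] at h ⊢
  intro ε hε
  have hC : 0 < |C| + 1 := by positivity
  filter_upwards [h (ε / (|C| + 1)) (by positivity)] with n hn x hx
  calc dist (c x * g x) (c x * f n x) = |c x| * dist (g x) (f n x) := by
        rw [Real.dist_eq, Real.dist_eq, ← mul_sub, abs_mul]
    _ ≤ (|C| + 1) * dist (g x) (f n x) := by
        gcongr
        linarith [hc x hx, le_abs_self C]
    _ < (|C| + 1) * (ε / (|C| + 1)) := by gcongr; exact hn x hx
    _ = ε := by field_simp

theorem hasDerivAt_intervalIntegral_of_deriv_le {E : Type*} [NormedAddCommGroup E]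
    [NormedSpace ℝ E] {f f' : ℝ → ℝ → E} {bound : ℝ → ℝ} (a b x : ℝ)
    (hf : ∀ y, Continuous (f y)) (hf' : Continuous (f' x)) (hbound : Continuous bound)
    (hle : ∀ y t, ‖f' y t‖ ≤ bound t) (hderiv : ∀ y t, HasDerivAt (fun y => f y t) (f' y t) y) :
    HasDerivAt (fun y => ∫ t in a..b, f y t) (∫ t in a..b, f' x t) x :=
  (hasDerivAt_integral_of_dominated_loc_of_deriv_le (s := univ) univ_mem
    (Eventually.of_forall fun y => (hf y).aestronglyMeasurable) ((hf x).intervalIntegrable a b)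
    hf'.aestronglyMeasurable (ae_of_all _ fun t _ y _ => hle y t)
    (hbound.intervalIntegrable a b) (ae_of_all _ fun t _ y _ => hderiv y t)).2

theorem hasDerivAt_airyPhase (x t : ℝ) :
    HasDerivAt (fun t : ℝ => t ^ 3 / 3 + x * t) (t ^ 2 + x) t :=
  (((hasDerivAt_pow 3 t).div_const 3).add ((hasDerivAt_id t).const_mul x)).congr_deriv (by simp)

theorem half_sq_le_sq_add {a t x : ℝ} (ha : 0 ≤ a) (hat : a ≤ t) (hxa : 2 * |x| ≤ a ^ 2) :
    t ^ 2 / 2 ≤ t ^ 2 + x := by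
  nlinarith [neg_abs_le x]

theorem sq_add_pos {a t x : ℝ} (ha : 0 < a) (hat : a ≤ t) (hxa : 2 * |x| ≤ a ^ 2) :
    0 < t ^ 2 + x := by
  have := ha.trans_le hat
  exact (by positivity : 0 < t ^ 2 / 2).trans_le (half_sq_le_sq_add ha.le hat hxa)

section AiryTail

variable {a b x : ℝ}

theorem abs_integral_cos_airyPhase_le (ha : 0 < a) (hxa : 2 * |x| ≤ a ^ 2) (hab : a ≤ b) :
    |∫ t in a..b, Real.cos (t ^ 3 / 3 + x * t)| ≤ 4 / a ^ 2 := by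
  have hpos : ∀ t ∈ Icc a b, 0 < t ^ 2 + x := fun t ht => sq_add_pos ha ht.1 hxa
  have hg : ∀ t ∈ Icc a b, HasDerivAt (fun t : ℝ => (t ^ 2 + x)⁻¹)
      (-(2 * t) / (t ^ 2 + x) ^ 2) t := fun t ht =>
    (((hasDerivAt_pow 2 t).add_const x).inv (hpos t ht).ne').congr_deriv (by simp)
  have hsplit : EqOn (fun t => Real.cos (t ^ 3 / 3 + x * t))
      (fun t => (t ^ 2 + x)⁻¹ * (Real.cos (t ^ 3 / 3 + x * t) * (t ^ 2 + x))) (uIcc a b) :=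
    fun t ht => by
      rw [uIcc_of_le hab] at ht
      field_simp [(hpos t ht).ne']
  rw [integral_congr hsplit]
  refine (abs_integral_mul_deriv_le_of_antitone hab hg (fun t ht => ?_) ?_ ?_
    (fun t _ => (hasDerivAt_airyPhase x t).sin) (Continuous.intervalIntegrable (by fun_prop) a b)
    (fun t _ => Real.abs_sin_le_one _)).trans ?_
  · have : 0 < t := ha.trans_le ht.1
    have := hpos t ht
    exact div_nonpos_of_nonpos_of_nonneg (by linarith) (by positivity)
  · refine ContinuousOn.intervalIntegrable_of_Icc hab ?_
    exact ContinuousOn.div (by fun_prop) (by fun_prop) fun t ht => pow_ne_zero 2 (hpos t ht).ne'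
  · exact (inv_pos.mpr (hpos b (right_mem_Icc.mpr hab))).le
  · have h := half_sq_le_sq_add ha.le le_rfl hxa
    rw [mul_inv_le_iff₀ (hpos a (left_mem_Icc.mpr hab)), div_mul_eq_mul_div,
      le_div_iff₀ (by positivity)]
    nlinarith

theorem abs_integral_mul_sin_airyPhase_le (ha : 0 < a) (hxa : 2 * |x| ≤ a ^ 2) (hab : a ≤ b) :
    |∫ t in a..b, t * Real.sin (t ^ 3 / 3 + x * t)| ≤ 4 / a := by
  have hpos : ∀ t ∈ Icc a b, 0 < t ^ 2 + x := fun t ht => sq_add_pos ha ht.1 hxa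
  have hg : ∀ t ∈ Icc a b, HasDerivAt (fun t : ℝ => t / (t ^ 2 + x))
      ((x - t ^ 2) / (t ^ 2 + x) ^ 2) t := fun t ht =>
    ((hasDerivAt_id t).div ((hasDerivAt_pow 2 t).add_const x) (hpos t ht).ne').congr_deriv
      (by simp; ring)
  have hsplit : EqOn (fun t => t * Real.sin (t ^ 3 / 3 + x * t))
      (fun t => t / (t ^ 2 + x) * (Real.sin (t ^ 3 / 3 + x * t) * (t ^ 2 + x))) (uIcc a b) :=
    fun t ht => by
      rw [uIcc_of_le hab] at ht
      field_simp [(hpos t ht).ne']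
  rw [integral_congr hsplit]
  refine (abs_integral_mul_deriv_le_of_antitone hab hg (fun t ht => ?_) ?_ ?_
    (v := fun t => -Real.cos (t ^ 3 / 3 + x * t))
    (fun t _ => (hasDerivAt_airyPhase x t).cos.neg.congr_deriv (by ring))
    (Continuous.intervalIntegrable (by fun_prop) a b)
    (fun t _ => by rw [abs_neg]; exact Real.abs_cos_le_one _)).trans ?_
  · have : a ^ 2 ≤ t ^ 2 := pow_le_pow_left₀ ha.le ht.1 2
    exact div_nonpos_of_nonpos_of_nonneg (by linarith [le_abs_self x, abs_nonneg x]) (by positivity)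
  · refine ContinuousOn.intervalIntegrable_of_Icc hab ?_
    exact ContinuousOn.div (by fun_prop) (by fun_prop) fun t ht => pow_ne_zero 2 (hpos t ht).ne'
  · exact div_nonneg (ha.trans_le hab).le (hpos b (right_mem_Icc.mpr hab)).le
  · have h := half_sq_le_sq_add ha.le le_rfl hxa
    rw [← mul_div_assoc, div_le_div_iff₀ (hpos a (left_mem_Icc.mpr hab)) ha]
    nlinarith

end AiryTail

noncomputable def airyTrunc (R x : ℝ) : ℝ := ∫ t in (0:ℝ)..R, Real.cos (t ^ 3 / 3 + x * t)

noncomputable def airyDerivTrunc (R x : ℝ) : ℝ :=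
  ∫ t in (0:ℝ)..R, -(t * Real.sin (t ^ 3 / 3 + x * t))

noncomputable def airyDeriv (x : ℝ) : ℝ := limUnder atTop (airyDerivTrunc · x)

theorem eventually_two_mul_abs_le_sq (M : ℝ) :
    ∀ᶠ a : ℝ in atTop, 0 < a ∧ ∀ x ∈ Metric.ball (0:ℝ) M, 2 * |x| ≤ a ^ 2 := by
  filter_upwards [eventually_gt_atTop 0,
    (tendsto_pow_atTop two_ne_zero).eventually_ge_atTop (2 * M)] with a ha haM
  refine ⟨ha, fun x hx => ?_⟩
  rw [mem_ball_zero_iff, Real.norm_eq_abs] at hx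
  linarith

theorem tendstoUniformlyOn_airyTrunc (M : ℝ) :
    TendstoUniformlyOn airyTrunc Ai atTop (Metric.ball 0 M) := by
  refine (uniformCauchySeqOn_of_dist_le (δ := fun a => 4 / a ^ 2)
    (tendsto_const_nhds.div_atTop (tendsto_pow_atTop two_ne_zero)) ?_).tendstoUniformlyOn_limUnder
  filter_upwards [eventually_two_mul_abs_le_sq M] with a ⟨ha, hM⟩ b hab x hx
  rw [Real.dist_eq, airyTrunc, airyTrunc, integral_interval_sub_left
    (Continuous.intervalIntegrable (by fun_prop) _ _)
    (Continuous.intervalIntegrable (by fun_prop) _ _)]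
  exact abs_integral_cos_airyPhase_le ha (hM x hx) hab

theorem tendstoUniformlyOn_airyDerivTrunc (M : ℝ) :
    TendstoUniformlyOn airyDerivTrunc airyDeriv atTop (Metric.ball 0 M) := by
  refine (uniformCauchySeqOn_of_dist_le (δ := fun a => 4 / a)
    (tendsto_const_nhds.div_atTop tendsto_id) ?_).tendstoUniformlyOn_limUnder
  filter_upwards [eventually_two_mul_abs_le_sq M] with a ⟨ha, hM⟩ b hab x hx
  rw [Real.dist_eq, airyDerivTrunc, airyDerivTrunc, integral_interval_sub_left
    (Continuous.intervalIntegrable (by fun_prop) _ _)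
    (Continuous.intervalIntegrable (by fun_prop) _ _),
    intervalIntegral.integral_neg, abs_neg]
  exact abs_integral_mul_sin_airyPhase_le ha (hM x hx) hab

theorem mem_ball_zero_abs_add_one (x : ℝ) : x ∈ Metric.ball (0:ℝ) (|x| + 1) := by
  rw [mem_ball_zero_iff, Real.norm_eq_abs]
  exact lt_add_one _

theorem tendsto_airyTrunc (x : ℝ) : Tendsto (airyTrunc · x) atTop (𝓝 (Ai x)) :=
  (tendstoUniformlyOn_airyTrunc _).tendsto_at (mem_ball_zero_abs_add_one x)

theorem tendsto_airyDerivTrunc (x : ℝ) : Tendsto (airyDerivTrunc · x) atTop (𝓝 (airyDeriv x)) :=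
  (tendstoUniformlyOn_airyDerivTrunc _).tendsto_at (mem_ball_zero_abs_add_one x)

theorem hasDerivAt_airyTrunc (R x : ℝ) : HasDerivAt (airyTrunc R) (airyDerivTrunc R x) x :=
  hasDerivAt_intervalIntegral_of_deriv_le (f := fun y t => Real.cos (t ^ 3 / 3 + y * t))
    (f' := fun y t => -(t * Real.sin (t ^ 3 / 3 + y * t))) (bound := fun t => |t|) 0 R x
    (fun _ => by fun_prop) (by fun_prop) continuous_abs
    (fun y t => by
      rw [norm_neg, norm_mul, Real.norm_eq_abs]
      exact mul_le_of_le_one_right (abs_nonneg t) (Real.abs_sin_le_one _))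
    (fun y t => ((hasDerivAt_mul_const t).const_add (t ^ 3 / 3)).cos.congr_deriv (by ring))

theorem integral_neg_sq_mul_cos_airyPhase (R x : ℝ) :
    ∫ t in (0:ℝ)..R, -(t ^ 2 * Real.cos (t ^ 3 / 3 + x * t)) =
      x * airyTrunc R x - Real.sin (R ^ 3 / 3 + x * R) := by
  have hftc : ∫ t in (0:ℝ)..R, Real.cos (t ^ 3 / 3 + x * t) * (t ^ 2 + x) =
      Real.sin (R ^ 3 / 3 + x * R) := by
    simpa using integral_eq_sub_of_hasDerivAt (fun t _ => (hasDerivAt_airyPhase x t).sin)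
      (Continuous.intervalIntegrable (by fun_prop) 0 R)
  rw [airyTrunc, ← hftc, ← intervalIntegral.integral_const_mul, ← intervalIntegral.integral_sub
    (Continuous.intervalIntegrable (by fun_prop) 0 R)
    (Continuous.intervalIntegrable (by fun_prop) 0 R)]
  congr 1 with t
  ring

theorem hasDerivAt_airyDerivTrunc (R x : ℝ) :
    HasDerivAt (airyDerivTrunc R) (x * airyTrunc R x - Real.sin (R ^ 3 / 3 + x * R)) x := by
  rw [← integral_neg_sq_mul_cos_airyPhase]
  refine hasDerivAt_intervalIntegral_of_deriv_le
    (f := fun y t => -(t * Real.sin (t ^ 3 / 3 + y * t)))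
    (f' := fun y t => -(t ^ 2 * Real.cos (t ^ 3 / 3 + y * t))) (bound := fun t => t ^ 2) 0 R x
    (fun _ => by fun_prop) (by fun_prop) (by fun_prop) (fun y t => ?_) (fun y t => ?_)
  · rw [norm_neg, norm_mul, Real.norm_eq_abs, abs_pow, sq_abs]
    exact mul_le_of_le_one_right (sq_nonneg t) (Real.abs_cos_le_one _)
  · exact (((hasDerivAt_mul_const t).const_add (t ^ 3 / 3)).sin.const_mul t).neg.congr_deriv
      (by ring)

theorem hasDerivAt_Ai (x : ℝ) : HasDerivAt Ai (airyDeriv x) x :=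
  hasDerivAt_of_tendstoUniformlyOn Metric.isOpen_ball (tendstoUniformlyOn_airyDerivTrunc _)
    (Eventually.of_forall fun R y _ => hasDerivAt_airyTrunc R y) (fun y _ => tendsto_airyTrunc y)
    (mem_ball_zero_abs_add_one x)

theorem hasDerivAt_cos_airyPhase_div {R : ℝ} (hR : R ≠ 0) (x : ℝ) :
    HasDerivAt (fun y => Real.cos (R ^ 3 / 3 + y * R) / R) (-Real.sin (R ^ 3 / 3 + x * R)) x :=
  (((hasDerivAt_mul_const R).const_add (R ^ 3 / 3)).cos.div_const R).congr_deriv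
    (by field_simp)

theorem tendsto_cos_airyPhase_div (x : ℝ) :
    Tendsto (fun R => Real.cos (R ^ 3 / 3 + x * R) / R) atTop (𝓝 0) := by
  simp_rw [div_eq_inv_mul]
  exact tendsto_inv_atTop_zero.zero_mul_isBoundedUnder_le
    (isBoundedUnder_of ⟨1, fun R => by simpa using Real.abs_cos_le_one _⟩)

theorem hasDerivAt_airyDeriv (x : ℝ) : HasDerivAt airyDeriv (x * Ai x) x := by
  set M := |x| + 1
  have hderiv : ∀ᶠ R in atTop, ∀ y ∈ Metric.ball (0:ℝ) M, HasDerivAt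
      (fun y => airyDerivTrunc R y - Real.cos (R ^ 3 / 3 + y * R) / R) (y * airyTrunc R y) y := by
    filter_upwards [eventually_ne_atTop 0] with R hR y _
    exact ((hasDerivAt_airyDerivTrunc R y).sub (hasDerivAt_cos_airyPhase_div hR y)).congr_deriv
      (by ring)
  have hlim : ∀ y ∈ Metric.ball (0:ℝ) M, Tendsto
      (fun R => airyDerivTrunc R y - Real.cos (R ^ 3 / 3 + y * R) / R) atTop (𝓝 (airyDeriv y)) :=
    fun y _ => by simpa using (tendsto_airyDerivTrunc y).sub (tendsto_cos_airyPhase_div y)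
  have hunif := (tendstoUniformlyOn_airyTrunc M).mul_left_of_abs_le (c := id) (C := M)
    fun y hy => by simpa [Real.norm_eq_abs] using (mem_ball_zero_iff.mp hy).le
  exact hasDerivAt_of_tendstoUniformlyOn Metric.isOpen_ball hunif hderiv hlim
    (mem_ball_zero_abs_add_one x)

theorem airy_ODE :
    Differentiable ℝ Ai ∧ Differentiable ℝ (deriv Ai) ∧
      ∀ x : ℝ, deriv (deriv Ai) x = x * Ai x := by
  have hAi : deriv Ai = airyDeriv := funext fun x => (hasDerivAt_Ai x).deriv
  rw [hAi]
  exact ⟨fun x => (hasDerivAt_Ai x).differentiableAt,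
    fun x => (hasDerivAt_airyDeriv x).differentiableAt, fun x => (hasDerivAt_airyDeriv x).deriv⟩
end

section
/- The space of bounded solutions of the Airy differential equation is at most one-dimensional: if y₁, y₂ : ℝ → ℝ are twice differentiable functions satisfying y₁''(x) = x·y₁(x) and y₂''(x) = x·y₂(x) for all real x, and both y₁ and y₂ are bounded on ℝ, then y₁ and y₂ are linearly dependent over ℝ. -/
/-!
Solutions of `y'' = q y` form a vector space on which `y ↦ (y 0, y' 0)` is injective, by
Grönwall-type uniqueness for the first-order system `(y, y')' = (y', q y)`. When `q ≥ 0` on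
`[0, ∞)`, `(y y')' = y'^2 + q y^2 ≥ 0` there, so `(y^2)' = 2 y y' ≥ 2 y(0) y'(0)` and a solution
with `y(0) y'(0) > 0` grows at least like `√x`. If the initial data of two bounded solutions were
linearly independent, some combination of them would have initial data `(1, 1)` and still be
bounded; so the initial data are dependent, and by injectivity so are the solutions.
-/

open Set

theorem exists_smul_add_smul_eq_zero_or_forall_exists {K : Type*} [Field K] (v₁ v₂ : K × K) :
    (∃ a b : K, (a ≠ 0 ∨ b ≠ 0) ∧ a • v₁ + b • v₂ = 0) ∨ ∀ w, ∃ a b : K, a • v₁ + b • v₂ = w := by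
  let L : K × K →ₗ[K] K × K :=
    (LinearMap.fst K K K).smulRight v₁ + (LinearMap.snd K K K).smulRight v₂
  by_cases hL : Function.Injective L
  · right
    intro w
    obtain ⟨⟨a, b⟩, h⟩ := LinearMap.injective_iff_surjective.mp hL w
    exact ⟨a, b, h⟩
  · left
    simp only [injective_iff_map_eq_zero, not_forall, exists_prop] at hL
    obtain ⟨⟨a, b⟩, hab, hne⟩ := hL
    exact ⟨a, b, by simpa [or_iff_not_imp_left] using hne, hab⟩

lemma monotoneOn_Ici_of_hasDerivAt_nonneg {f f' : ℝ → ℝ} {a : ℝ}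
    (hf : ∀ t, HasDerivAt f (f' t) t) (hf' : ∀ t, a < t → 0 ≤ f' t) : MonotoneOn f (Ici a) :=
  monotoneOn_of_hasDerivWithinAt_nonneg (convex_Ici a) (HasDerivAt.continuousOn fun t _ => hf t)
    (fun t _ => (hf t).hasDerivWithinAt) fun t ht => hf' t (by rwa [interior_Ici] at ht)

def secondOrderSolutions (q : ℝ → ℝ) : Submodule ℝ (ℝ → ℝ) where
  carrier := {y | Differentiable ℝ y ∧ Differentiable ℝ (deriv y) ∧
    ∀ x, deriv (deriv y) x = q x * y x}
  zero_mem' := ⟨differentiable_const 0, by simp, by simp⟩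
  add_mem' := by
    rintro y z ⟨hy, hy', hy''⟩ ⟨hz, hz', hz''⟩
    have hd : deriv (y + z) = deriv y + deriv z := funext fun x => deriv_add (hy x) (hz x)
    refine ⟨hy.add hz, hd ▸ hy'.add hz', fun x => ?_⟩
    rw [hd, deriv_add (hy' x) (hz' x), hy'', hz'', Pi.add_apply]
    ring
  smul_mem' := by
    rintro c y ⟨hy, hy', hy''⟩
    have hd : deriv (c • y) = c • deriv y := funext fun x => deriv_const_smul c (hy x)
    refine ⟨hy.const_smul c, hd ▸ hy'.const_smul c, fun x => ?_⟩
    simp only [hd, deriv_const_smul c (hy' x), Pi.smul_apply, hy'', smul_eq_mul]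
    ring

namespace secondOrderSolutions

variable {q y : ℝ → ℝ}

def vectorField (q : ℝ → ℝ) (t : ℝ) (p : ℝ × ℝ) : ℝ × ℝ := (p.2, q t * p.1)

lemma lipschitzWith_vectorField {t : ℝ} {K : NNReal} (hK : 1 ≤ K) (hq : |q t| ≤ K) :
    LipschitzWith K (vectorField q t) := by
  refine LipschitzWith.of_dist_le_mul fun p p' => ?_
  simp only [vectorField, Prod.dist_eq, Real.dist_eq, ← mul_sub, abs_mul]
  have h₁ : |p.1 - p'.1| ≤ max |p.1 - p'.1| |p.2 - p'.2| := le_max_left _ _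
  have h₂ : |p.2 - p'.2| ≤ max |p.1 - p'.1| |p.2 - p'.2| := le_max_right _ _
  have h₀ : 0 ≤ max |p.1 - p'.1| |p.2 - p'.2| := h₁.trans' (abs_nonneg _)
  exact max_le (h₂.trans (le_mul_of_one_le_left h₀ (by exact_mod_cast hK)))
    (mul_le_mul hq h₁ (abs_nonneg _) K.2)

lemma hasDerivAt_vectorField (hy : y ∈ secondOrderSolutions q) (t : ℝ) :
    HasDerivAt (fun t => (y t, deriv y t)) (vectorField q t (y t, deriv y t)) t := by
  obtain ⟨hy, hy', hode⟩ := hy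
  simpa only [vectorField, hode] using (hy t).hasDerivAt.prodMk (hy' t).hasDerivAt

theorem eq_zero_of_eq_zero_of_deriv_eq_zero (hq : Continuous q) (hy : y ∈ secondOrderSolutions q)
    (h0 : y 0 = 0) (h0' : deriv y 0 = 0) : y = 0 := by
  ext x
  set R := |x| + 1
  obtain ⟨B, hB⟩ := (isCompact_Icc (a := -R) (b := R)).exists_bound_of_continuousOn hq.continuousOn
  have hv : ∀ t ∈ Ioo (-R) R, LipschitzOnWith (max 1 B).toNNReal (vectorField q t) univ :=
    fun t ht => (lipschitzWith_vectorField (by simp)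
      (by simpa using .inr (hB t (Ioo_subset_Icc_self ht)))).lipschitzOnWith
  have hzero (t : ℝ) : HasDerivAt (fun _ => (0 : ℝ × ℝ)) (vectorField q t 0) t :=
    (hasDerivAt_const t 0).congr_deriv (by ext <;> simp [vectorField])
  have hR : 0 < R := by positivity
  have hstate := ODE_solution_unique_of_mem_Ioo hv (t₀ := 0) ⟨neg_lt_zero.2 hR, hR⟩
    (fun t _ => ⟨hasDerivAt_vectorField hy t, mem_univ _⟩) (fun t _ => ⟨hzero t, mem_univ _⟩)
    (by simp [h0, h0']) (abs_lt.mp (lt_add_one |x|))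
  exact congrArg Prod.fst hstate

@[simps]
noncomputable def initialData (q : ℝ → ℝ) : secondOrderSolutions q →ₗ[ℝ] ℝ × ℝ where
  toFun y := ((y : ℝ → ℝ) 0, deriv (y : ℝ → ℝ) 0)
  map_add' y z := by simp [deriv_add (y.2.1 0) (z.2.1 0)]
  map_smul' c y := by simp [deriv_const_smul c (y.2.1 0)]

theorem initialData_injective (hq : Continuous q) : Function.Injective (initialData q) := by
  refine (injective_iff_map_eq_zero _).2 fun y hy => Subtype.ext ?_
  simp only [initialData_apply, Prod.mk_eq_zero] at hy
  exact eq_zero_of_eq_zero_of_deriv_eq_zero hq y.2 hy.1 hy.2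

theorem sq_add_two_mul_le_sq (hq : ∀ x, 0 ≤ x → 0 ≤ q x) (hy : y ∈ secondOrderSolutions q)
    {x : ℝ} (hx : 0 ≤ x) : y 0 ^ 2 + 2 * (y 0 * deriv y 0) * x ≤ y x ^ 2 := by
  obtain ⟨hy, hy', hode⟩ := hy
  have hmul : MonotoneOn (fun t => y t * deriv y t) (Ici 0) := by
    refine monotoneOn_Ici_of_hasDerivAt_nonneg
      (f' := fun t => deriv y t ^ 2 + q t * y t ^ 2) (fun t => ?_) fun t ht => ?_
    · exact ((hy t).hasDerivAt.mul (hy' t).hasDerivAt).congr_deriv (by rw [hode]; ring)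
    · have := hq t ht.le
      positivity
  have hsq : MonotoneOn (fun t => y t ^ 2 - 2 * (y 0 * deriv y 0) * t) (Ici 0) := by
    refine monotoneOn_Ici_of_hasDerivAt_nonneg
      (f' := fun t => 2 * (y t * deriv y t) - 2 * (y 0 * deriv y 0)) (fun t => ?_) fun t ht => ?_
    · exact (((hy t).hasDerivAt.pow 2).sub ((hasDerivAt_id t).const_mul _)).congr_deriv
        (by simp only [Nat.cast_ofNat, Nat.add_one_sub_one, pow_one, mul_one]; ring)
    · linarith [hmul self_mem_Ici (mem_Ici.2 ht.le) ht.le]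
  have hx' := hsq self_mem_Ici hx hx
  simp only [mul_zero, sub_zero] at hx'
  linarith

theorem exists_lt_abs_of_mul_deriv_pos (hq : ∀ x, 0 ≤ x → 0 ≤ q x)
    (hy : y ∈ secondOrderSolutions q) (h : 0 < y 0 * deriv y 0) (M : ℝ) : ∃ x, M < |y x| := by
  by_contra! hM
  set x := (M ^ 2 + 1) / (2 * (y 0 * deriv y 0))
  have hgrow := sq_add_two_mul_le_sq hq hy (x := x) (by positivity)
  have hx : 2 * (y 0 * deriv y 0) * x = M ^ 2 + 1 := mul_div_cancel₀ _ (by positivity)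
  have hbound : y x ^ 2 ≤ M ^ 2 := by
    rw [← sq_abs]
    exact pow_le_pow_left₀ (abs_nonneg _) (hM x) 2
  nlinarith [sq_nonneg (y 0)]

end secondOrderSolutions

theorem bounded_airy_solutions_dependent
    (y₁ y₂ : ℝ → ℝ)
    (h₁ : Differentiable ℝ y₁) (h₁' : Differentiable ℝ (deriv y₁))
    (h₂ : Differentiable ℝ y₂) (h₂' : Differentiable ℝ (deriv y₂))
    (ode₁ : ∀ x : ℝ, deriv (deriv y₁) x = x * y₁ x)
    (ode₂ : ∀ x : ℝ, deriv (deriv y₂) x = x * y₂ x)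
    (b₁ : ∃ M : ℝ, ∀ x : ℝ, |y₁ x| ≤ M)
    (b₂ : ∃ M : ℝ, ∀ x : ℝ, |y₂ x| ≤ M) :
    ∃ a b : ℝ, (a ≠ 0 ∨ b ≠ 0) ∧ ∀ x : ℝ, a * y₁ x + b * y₂ x = 0 := by
  let u₁ : secondOrderSolutions id := ⟨y₁, h₁, h₁', ode₁⟩
  let u₂ : secondOrderSolutions id := ⟨y₂, h₂, h₂', ode₂⟩
  rcases exists_smul_add_smul_eq_zero_or_forall_exists (secondOrderSolutions.initialData _ u₁)
      (secondOrderSolutions.initialData _ u₂) with ⟨a, b, hab, hdep⟩ | hspan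
  · refine ⟨a, b, hab, fun x => ?_⟩
    have : a • u₁ + b • u₂ = 0 := by
      apply secondOrderSolutions.initialData_injective continuous_id
      rwa [map_zero, map_add, map_smul, map_smul]
    simpa [u₁, u₂] using congrFun (congrArg Subtype.val this) x
  · obtain ⟨a, b, hab⟩ := hspan (1, 1)
    rw [← map_smul, ← map_smul, ← map_add, secondOrderSolutions.initialData_apply,
      Prod.mk.injEq] at hab
    obtain ⟨M₁, hM₁⟩ := b₁
    obtain ⟨M₂, hM₂⟩ := b₂
    obtain ⟨x, hx⟩ := secondOrderSolutions.exists_lt_abs_of_mul_deriv_pos (fun _ => id)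
      (a • u₁ + b • u₂).2 (by rw [hab.1, hab.2]; norm_num) (|a| * M₁ + |b| * M₂)
    have hbdd : |a * y₁ x + b * y₂ x| ≤ |a| * M₁ + |b| * M₂ := calc
      _ ≤ |a * y₁ x| + |b * y₂ x| := abs_add_le _ _
      _ = |a| * |y₁ x| + |b| * |y₂ x| := by rw [abs_mul, abs_mul]
      _ ≤ |a| * M₁ + |b| * M₂ := by gcongr <;> [exact hM₁ x; exact hM₂ x]
    exact absurd hbdd hx.not_ge
end

section
/- For every real x > 0, the Airy function admits the exact Gaussian-type representation Ai(x) = e^{−(2/3)x^{3/2}} · x^{−1/4}/(2√2) · ∫_{−∞}^{∞} e^{−t²/2} · e^{i·x^{−3/4}·t³/(6√2)} dt, where the integral on the right-hand side is an absolutely convergent integral of a complex-valued function and the identity is an equality of complex numbers (the right-hand side being real). -/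
/-!
Write b = √x and integrate e^{i(z³/3 + b²z)} over the boundary of the rectangle with corners
0, R, R + ib, ib. On the top side the integrand is e^{-2b³/3} e^{-bt² + it³/3}; the right side
tends to 0 as R → ∞, and on the left side the integrand is real, so after the factor i it
contributes nothing to the real part. Hence Ai(b²) = e^{-2b³/3} Re ∫₀^∞ e^{-bt² + it³/3} dt.
Since the conjugate of that integrand is its reflection t ↦ -t, twice this real part is the
integral over the whole line, and the substitution t ↦ t / (√2 x^{1/4}) turns e^{-bt²}
into e^{-t²/2}.
-/

open Filter intervalIntegral MeasureTheory

open Complex ComplexConjugate Set Topology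

noncomputable def airyIntegrand (x : ℝ) (z : ℂ) : ℂ := cexp (I * (z ^ 3 / 3 + x * z))

noncomputable def gaussCubic (a c t : ℝ) : ℂ := cexp (-(a * t ^ 2) + I * (c * t ^ 3))

lemma differentiable_airyIntegrand (x : ℝ) : Differentiable ℂ (airyIntegrand x) := by
  unfold airyIntegrand; fun_prop

lemma re_intervalIntegral_airyIntegrand (x R : ℝ) :
    (∫ t in (0:ℝ)..R, airyIntegrand x t).re = ∫ t in (0:ℝ)..R, Real.cos (t ^ 3 / 3 + x * t) := by
  have hint : IntervalIntegrable (fun t : ℝ => airyIntegrand x t) volume 0 R :=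
    ((differentiable_airyIntegrand x).continuous.comp continuous_ofReal).intervalIntegrable _ _
  rw [← RCLike.re_to_complex, ← intervalIntegral_re hint]
  refine integral_congr fun t _ => ?_
  simp only [airyIntegrand, RCLike.re_to_complex]
  rw [← Complex.exp_ofReal_mul_I_re]
  push_cast; ring_nf

lemma norm_airyIntegrand_add_mul_I (x R y : ℝ) :
    ‖airyIntegrand x (R + y * I)‖ = Real.exp (y ^ 3 / 3 - x * y - R ^ 2 * y) := by
  rw [airyIntegrand, norm_exp]
  congr 1
  have hexponent : I * ((R + y * I) ^ 3 / 3 + x * (R + y * I)) =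
      ((y ^ 3 / 3 - x * y - R ^ 2 * y : ℝ) : ℂ)
        + ((R ^ 3 / 3 - R * y ^ 2 + x * R : ℝ) : ℂ) * I := by
    push_cast; ring_nf; simp only [I_sq, I_pow_three, I_pow_four]; ring
  rw [hexponent, add_re, ofReal_re, re_ofReal_mul, I_re, mul_zero, add_zero]

lemma airyIntegrand_add_mul_I (b t : ℝ) :
    airyIntegrand (b ^ 2) (t + b * I) = Real.exp (-(2 / 3) * b ^ 3) * gaussCubic b (1 / 3) t := by
  rw [airyIntegrand, gaussCubic, ofReal_exp, ← Complex.exp_add]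
  congr 1
  push_cast; ring_nf; simp only [I_sq, I_pow_three, I_pow_four]; ring

lemma airyIntegrand_mul_I (x y : ℝ) :
    airyIntegrand x (y * I) = Real.exp (y ^ 3 / 3 - x * y) := by
  rw [airyIntegrand, ofReal_exp]
  congr 1
  push_cast; ring_nf; simp only [I_sq, I_pow_four]; ring

lemma norm_gaussCubic (a c t : ℝ) : ‖gaussCubic a c t‖ = Real.exp (-(a * t ^ 2)) := by
  rw [gaussCubic, norm_exp]
  congr 1
  simp [← ofReal_pow]

lemma continuous_gaussCubic (a c : ℝ) : Continuous (gaussCubic a c) := by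
  unfold gaussCubic; fun_prop

lemma integrable_gaussCubic {a : ℝ} (ha : 0 < a) (c : ℝ) : Integrable (gaussCubic a c) :=
  (integrable_exp_neg_mul_sq ha).mono' (continuous_gaussCubic a c).aestronglyMeasurable
    (ae_of_all _ fun t => by rw [norm_gaussCubic, neg_mul])

lemma conj_gaussCubic (a c t : ℝ) : conj (gaussCubic a c t) = gaussCubic a c (-t) := by
  simp only [gaussCubic]
  rw [← exp_conj]
  congr 1
  simp only [map_add, map_neg, map_mul, map_pow, conj_I, conj_ofReal]
  push_cast; ring

lemma gaussCubic_mul (a c s t : ℝ) :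
    gaussCubic a c (s * t) = gaussCubic (a * s ^ 2) (c * s ^ 3) t := by
  simp only [gaussCubic]; push_cast; ring_nf

lemma intervalIntegral_eq_shift_add_sides {f : ℂ → ℂ} (hf : Differentiable ℂ f)
    (R b : ℝ) :
    ∫ t in (0:ℝ)..R, f t = (∫ t in (0:ℝ)..R, f (t + b * I))
      - I * (∫ y in (0:ℝ)..b, f (R + y * I)) + I * ∫ y in (0:ℝ)..b, f (y * I) := by
  have h := integral_boundary_rect_eq_zero_of_differentiableOn f 0 ⟨R, b⟩ hf.differentiableOn
  simp only [zero_re, zero_im, ofReal_zero, zero_mul, add_zero, zero_add, smul_eq_mul] at h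
  linear_combination h

lemma tendsto_intervalIntegral_airyIntegrand_vertical (x : ℝ) {b : ℝ} (hb : 0 ≤ b) :
    Tendsto (fun R : ℝ => ∫ y in (0:ℝ)..b, airyIntegrand x (R + y * I)) atTop (𝓝 0) := by
  have hlim : ∀ y ∈ Ioi (0:ℝ),
      Tendsto (fun R : ℝ => airyIntegrand x (R + y * I)) atTop (𝓝 0) := by
    intro y hy
    rw [tendsto_zero_iff_norm_tendsto_zero]
    simp only [norm_airyIntegrand_add_mul_I]
    refine Real.tendsto_exp_atBot.comp (tendsto_atBot_add_const_left _ _ ?_)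
    exact tendsto_neg_atTop_atBot.comp ((tendsto_pow_atTop two_ne_zero).atTop_mul_const hy)
  simpa using intervalIntegral.tendsto_integral_filter_of_dominated_convergence
    (F := fun (R y : ℝ) => airyIntegrand x (R + y * I)) (fun y => Real.exp (y ^ 3 / 3 - x * y))
    (Eventually.of_forall fun R => (((differentiable_airyIntegrand x).continuous.comp
      (by fun_prop : Continuous fun y : ℝ => (R : ℂ) + y * I)).aestronglyMeasurable))
    (Eventually.of_forall fun R => ae_of_all _ fun y hy => by
      rw [uIoc_of_le hb] at hy
      rw [norm_airyIntegrand_add_mul_I]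
      exact Real.exp_le_exp.mpr (by nlinarith [hy.1, sq_nonneg R]))
    ((by fun_prop : Continuous fun y : ℝ => Real.exp (y ^ 3 / 3 - x * y)).intervalIntegrable _ _)
    (ae_of_all _ fun y hy => hlim y (by rw [uIoc_of_le hb] at hy; exact hy.1))

lemma tendsto_intervalIntegral_airyIntegrand {b : ℝ} (hb : 0 < b) :
    Tendsto (fun R : ℝ => ∫ t in (0:ℝ)..R, airyIntegrand (b ^ 2) t) atTop
      (𝓝 (Real.exp (-(2 / 3) * b ^ 3) * (∫ t in Ioi (0:ℝ), gaussCubic b (1 / 3) t)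
        + I * ∫ y in (0:ℝ)..b, Real.exp (y ^ 3 / 3 - b ^ 2 * y))) := by
  have horizontal : Tendsto (fun R : ℝ => ∫ t in (0:ℝ)..R, airyIntegrand (b ^ 2) (t + b * I))
      atTop (𝓝 (Real.exp (-(2 / 3) * b ^ 3) * ∫ t in Ioi (0:ℝ), gaussCubic b (1 / 3) t)) := by
    simp only [airyIntegrand_add_mul_I, intervalIntegral.integral_const_mul]
    exact ((intervalIntegral_tendsto_integral_Ioi 0
      (integrable_gaussCubic hb _).integrableOn tendsto_id).const_mul _)
  have side_at_zero : ∫ y in (0:ℝ)..b, airyIntegrand (b ^ 2) (y * I)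
      = ∫ y in (0:ℝ)..b, Real.exp (y ^ 3 / 3 - b ^ 2 * y) := by
    simp only [airyIntegrand_mul_I, intervalIntegral.integral_ofReal]
  have hlim := (horizontal.sub ((tendsto_intervalIntegral_airyIntegrand_vertical (b ^ 2)
    hb.le).const_mul I)).add_const (I * ∫ y in (0:ℝ)..b, airyIntegrand (b ^ 2) (y * I))
  rw [mul_zero, sub_zero, side_at_zero] at hlim
  refine hlim.congr fun R => ?_
  rw [← side_at_zero, intervalIntegral_eq_shift_add_sides (differentiable_airyIntegrand _) R b]

lemma Ai_sq_eq_re_setIntegral_Ioi {b : ℝ} (hb : 0 < b) :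
    Ai (b ^ 2) = Real.exp (-(2 / 3) * b ^ 3) * (∫ t in Ioi (0:ℝ), gaussCubic b (1 / 3) t).re := by
  refine Tendsto.limUnder_eq ?_
  have hlim := (continuous_re.tendsto _).comp (tendsto_intervalIntegral_airyIntegrand hb)
  simp only [Function.comp_def, re_intervalIntegral_airyIntegrand] at hlim
  simpa [-ofReal_exp] using hlim

lemma integral_eq_two_mul_re_setIntegral_Ioi {g : ℝ → ℂ} (hg : Integrable g)
    (hconj : ∀ t, conj (g t) = g (-t)) :
    ∫ t, g t = ((2 * (∫ t in Ioi (0:ℝ), g t).re : ℝ) : ℂ) := by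
  have hIic : ∫ t in Iic (0:ℝ), g t = conj (∫ t in Ioi (0:ℝ), g t) := by
    rw [← integral_conj, ← neg_zero, ← integral_comp_neg_Iic]
    simp only [hconj, neg_neg, neg_zero]
  rw [← integral_Iic_add_Ioi hg.integrableOn hg.integrableOn, hIic, add_comm, add_conj]

lemma Ai_sq_eq_integral_gaussCubic {b : ℝ} (hb : 0 < b) :
    (Ai (b ^ 2) : ℂ) = (Real.exp (-(2 / 3) * b ^ 3) / 2 : ℝ) * ∫ t, gaussCubic b (1 / 3) t := by
  rw [integral_eq_two_mul_re_setIntegral_Ioi (integrable_gaussCubic hb _) (conj_gaussCubic b _),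
    Ai_sq_eq_re_setIntegral_Ioi hb, ← ofReal_mul]
  ring_nf

lemma integral_gaussCubic_mul_pow (a c s : ℝ) :
    ∫ t, gaussCubic (a * s ^ 2) (c * s ^ 3) t = |s⁻¹| * ∫ t, gaussCubic a c t := by
  simp only [← gaussCubic_mul, Measure.integral_comp_mul_left, real_smul]

lemma Ai_pow_four_eq_integral {q : ℝ} (hq : 0 < q) :
    (Ai ((q ^ 2) ^ 2) : ℂ) =
      (Real.exp (-(2 / 3) * (q ^ 2) ^ 3) * q⁻¹ / (2 * Real.sqrt 2) : ℝ) *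
        ∫ t : ℝ, cexp (-(t:ℂ) ^ 2 / 2) *
          cexp (I * (q⁻¹ ^ 3 : ℝ) * (t:ℂ) ^ 3 / (6 * (Real.sqrt 2 : ℂ))) := by
  have hs : 0 < Real.sqrt 2 * q := by positivity
  have ha : q ^ 2 * (Real.sqrt 2 * q)⁻¹ ^ 2 = 1 / 2 := by
    field_simp; norm_num
  have hc : 1 / 3 * (Real.sqrt 2 * q)⁻¹ ^ 3 = q⁻¹ ^ 3 / (6 * Real.sqrt 2) := by
    field_simp; norm_num
  have hintegrand : (fun t : ℝ => cexp (-(t:ℂ) ^ 2 / 2) *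
      cexp (I * ((q⁻¹ ^ 3 : ℝ) : ℂ) * (t:ℂ) ^ 3 / (6 * (Real.sqrt 2 : ℂ))))
        = gaussCubic (q ^ 2 * (Real.sqrt 2 * q)⁻¹ ^ 2) (1 / 3 * (Real.sqrt 2 * q)⁻¹ ^ 3) := by
    ext t
    rw [gaussCubic, ← Complex.exp_add, ha, hc]
    push_cast; ring_nf
  rw [hintegrand, integral_gaussCubic_mul_pow, Ai_sq_eq_integral_gaussCubic (by positivity),
    inv_inv, abs_of_pos hs, ← mul_assoc, ← ofReal_mul]
  congr 2
  field_simp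

theorem airy_gaussian_representation (x : ℝ) (hx : 0 < x) :
    (Ai x : ℂ) =
      (Real.exp (-(2 / 3) * x ^ ((3:ℝ)/2)) * x ^ (-(1:ℝ)/4) / (2 * Real.sqrt 2) : ℝ) *
        ∫ t : ℝ, Complex.exp (-(t:ℂ) ^ 2 / 2) *
          Complex.exp (Complex.I * (x ^ (-(3:ℝ)/4) : ℝ) * (t:ℂ) ^ 3 / (6 * (Real.sqrt 2 : ℂ))) := by
  obtain ⟨q, hq, rfl⟩ : ∃ q : ℝ, 0 < q ∧ x = (q ^ 2) ^ 2 :=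
    ⟨x ^ ((4 : ℕ) : ℝ)⁻¹, by positivity, by
      rw [← pow_mul]; exact (Real.rpow_inv_natCast_pow hx.le four_ne_zero).symm⟩
  have hpow (r : ℝ) : ((q ^ 2) ^ 2) ^ r = q ^ (4 * r) := by
    rw [← pow_mul, ← Real.rpow_natCast_mul hq.le]; norm_num
  have h32 : ((q ^ 2) ^ 2) ^ ((3:ℝ)/2) = (q ^ 2) ^ 3 := by
    rw [hpow, ← pow_mul, ← Real.rpow_natCast]; norm_num
  have h14 : ((q ^ 2) ^ 2) ^ (-(1:ℝ)/4) = q⁻¹ := by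
    rw [hpow]; norm_num [Real.rpow_neg_one]
  have h34 : ((q ^ 2) ^ 2) ^ (-(3:ℝ)/4) = q⁻¹ ^ 3 := by
    rw [hpow]; norm_num [Real.rpow_neg hq.le]
  rw [h32, h14, h34]
  exact Ai_pow_four_eq_integral hq
end

section
/- For every natural number N, as ε → 0 in ℝ, the deformed Gaussian integral satisfies ∫_{−∞}^{∞} e^{−t²/2} · e^{i·ε·t³} dt − Σ_{j=0}^{N−1} (iε)^j / j! · ∫_{−∞}^{∞} t^{3j} · e^{−t²/2} dt = O(|ε|^N). -/
/-!
Subtracting the finite sum under the integral sign leaves `e^{-t²/2}` times the Taylor remainder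
of `e^{ix}` at `x = εt³`. Since the derivative of the order-`N + 1` remainder is `i` times the
order-`N` remainder, induction and the mean value inequality bound the remainder by `|x|^N`, so the
difference is at most `(∫ |t|^{3N} e^{-t²/2} dt) · |ε|^N` for every `ε`.
-/

open Filter Asymptotics MeasureTheory

open Complex

theorem hasDerivAt_sum_range_succ_pow_div_factorial (N : ℕ) (z : ℂ) :
    HasDerivAt (fun w : ℂ => ∑ j ∈ Finset.range (N + 1), w ^ j / j.factorial)
      (∑ j ∈ Finset.range N, z ^ j / j.factorial) z := by
  induction N with
  | zero => simpa using hasDerivAt_const z (1 : ℂ)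
  | succ N ih =>
    have := ih.fun_add ((hasDerivAt_pow (N + 1) z).div_const ((N + 1).factorial : ℂ))
    simp only [← Finset.sum_range_succ] at this
    refine this.congr_deriv ?_
    rw [Finset.sum_range_succ, Nat.factorial_succ]
    push_cast
    field_simp

theorem norm_cexp_I_mul_sub_sum_le (N : ℕ) (x : ℝ) :
    ‖cexp (I * x) - ∑ j ∈ Finset.range N, (I * x) ^ j / j.factorial‖ ≤ |x| ^ N := by
  induction N generalizing x with
  | zero => simp [norm_exp_I_mul_ofReal]
  | succ N ih =>
    have hf : ∀ y : ℝ, HasDerivAt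
        (fun y : ℝ => cexp (I * y) - ∑ j ∈ Finset.range (N + 1), (I * y) ^ j / j.factorial)
        ((cexp (I * y) - ∑ j ∈ Finset.range N, (I * y) ^ j / j.factorial) * I) y := fun y => by
      simpa using (((hasDerivAt_exp _).sub
        (hasDerivAt_sum_range_succ_pow_div_factorial N _)).comp (y : ℂ)
          ((hasDerivAt_id _).const_mul I)).comp_ofReal
    have hbound : ∀ y ∈ Metric.closedBall (0 : ℝ) |x|,
        ‖(cexp (I * y) - ∑ j ∈ Finset.range N, (I * y) ^ j / j.factorial) * I‖ ≤ |x| ^ N := by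
      intro y hy
      rw [mem_closedBall_zero_iff, Real.norm_eq_abs] at hy
      rw [norm_mul, norm_I, mul_one]
      exact (ih y).trans (pow_le_pow_left₀ (abs_nonneg y) hy N)
    have := (convex_closedBall (0 : ℝ) |x|).norm_image_sub_le_of_norm_hasDerivWithin_le
      (fun y _ => (hf y).hasDerivWithinAt) hbound (Metric.mem_closedBall_self (abs_nonneg x))
      (by simp : x ∈ Metric.closedBall (0 : ℝ) |x|)
    simpa [Finset.sum_range_succ', pow_succ] using this

theorem norm_integral_mul_cexp_I_mul_sub_sum_le {α : Type*} [MeasurableSpace α] {μ : Measure α}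
    {g : α → ℂ} {φ : α → ℝ} {N : ℕ} (hφ : AEMeasurable φ μ)
    (hφg : ∀ j ≤ N, Integrable (fun x => (φ x : ℂ) ^ j * g x) μ) (ε : ℝ) :
    ‖(∫ x, g x * cexp (I * ε * φ x) ∂μ) -
        ∑ j ∈ Finset.range N, (I * ε) ^ j / j.factorial * ∫ x, (φ x : ℂ) ^ j * g x ∂μ‖ ≤
      (∫ x, ‖(φ x : ℂ) ^ N * g x‖ ∂μ) * |ε| ^ N := by
  have hg : Integrable g μ := by simpa using hφg 0 N.zero_le
  have hexp : Integrable (fun x => g x * cexp (I * ε * φ x)) μ := by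
    refine hg.mul_bdd (c := 1) (by fun_prop) (ae_of_all _ fun x => ?_)
    simp [norm_exp]
  have hterms : ∀ j ∈ Finset.range N,
      Integrable (fun x => (I * ε) ^ j / j.factorial * ((φ x : ℂ) ^ j * g x)) μ :=
    fun j hj => (hφg j (Finset.mem_range.1 hj).le).const_mul _
  have hsplit : (∫ x, g x * cexp (I * ε * φ x) ∂μ) -
        ∑ j ∈ Finset.range N, (I * ε) ^ j / j.factorial * ∫ x, (φ x : ℂ) ^ j * g x ∂μ =
      ∫ x, g x * (cexp (I * (ε * φ x : ℝ)) -
        ∑ j ∈ Finset.range N, (I * (ε * φ x : ℝ)) ^ j / j.factorial) ∂μ := by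
    simp_rw [← integral_const_mul, ← integral_finsetSum _ hterms, ← integral_sub hexp
      (integrable_finsetSum _ hterms), mul_sub, Finset.mul_sum]
    congr 1; ext x; congr 1
    · push_cast; rw [mul_assoc]
    · refine Finset.sum_congr rfl fun j _ => ?_
      push_cast; ring
  rw [hsplit, ← integral_mul_const]
  refine norm_integral_le_of_norm_le ((hφg N le_rfl).norm.mul_const _) (ae_of_all _ fun x => ?_)
  calc _ = ‖g x‖ * ‖cexp (I * (ε * φ x : ℝ)) -
        ∑ j ∈ Finset.range N, (I * (ε * φ x : ℝ)) ^ j / j.factorial‖ := norm_mul _ _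
    _ ≤ ‖g x‖ * |ε * φ x| ^ N := by gcongr; exact norm_cexp_I_mul_sub_sum_le N _
    _ = _ := by rw [norm_mul, norm_pow, norm_real, Real.norm_eq_abs, abs_mul, mul_pow]; ring

theorem integrable_pow_mul_cexp_neg_mul_sq (n : ℕ) {b : ℂ} (hb : 0 < b.re) :
    Integrable fun x : ℝ => (x : ℂ) ^ n * cexp (-b * (x : ℂ) ^ 2) := by
  have hreal : Integrable fun x : ℝ => x ^ n * Real.exp (-b.re * x ^ 2) := by
    simpa using integrable_rpow_mul_exp_neg_mul_sq hb (s := n)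
      (by linarith [n.cast_nonneg (α := ℝ)])
  refine hreal.mono (by fun_prop) (ae_of_all _ fun x => ?_)
  rw [norm_mul, norm_mul, norm_cexp_neg_mul_sq, norm_pow, norm_real, norm_pow,
    Real.norm_of_nonneg (Real.exp_pos _).le]

theorem deformed_gaussian_expansion (N : ℕ) :
    (fun ε : ℝ =>
        (∫ t : ℝ, Complex.exp (-(t:ℂ) ^ 2 / 2) * Complex.exp (Complex.I * (ε:ℂ) * (t:ℂ) ^ 3)) -
          ∑ j ∈ Finset.range N, (Complex.I * (ε:ℂ)) ^ j / (j.factorial : ℂ) *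
            ∫ t : ℝ, (t:ℂ) ^ (3 * j) * Complex.exp (-(t:ℂ) ^ 2 / 2))
      =O[nhds (0:ℝ)] (fun ε : ℝ => |ε| ^ N) := by
  have hgauss : ∀ n : ℕ, Integrable fun t : ℝ => (t : ℂ) ^ n * cexp (-(t : ℂ) ^ 2 / 2) := by
    intro n
    refine (integrable_pow_mul_cexp_neg_mul_sq n (b := 1 / 2) (by norm_num)).congr
      (ae_of_all _ fun t => ?_)
    ring_nf
  refine IsBigO.of_bound (∫ t : ℝ, ‖(t : ℂ) ^ (3 * N) * cexp (-(t : ℂ) ^ 2 / 2)‖)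
    (Eventually.of_forall fun ε => ?_)
  have := norm_integral_mul_cexp_I_mul_sub_sum_le (φ := fun t : ℝ => t ^ 3)
    (g := fun t : ℝ => cexp (-(t : ℂ) ^ 2 / 2)) (μ := volume) (N := N) (by fun_prop)
    (fun j _ => by simpa [← pow_mul] using hgauss (3 * j)) ε
  simpa [← pow_mul] using this
end

section
/- (Kontsevich's formula for N = 1) For every natural number M, as λ → ∞ along the positive reals, (1/√(2π)) · ∫_{−∞}^{∞} e^{(i/6)·λ^{−3/2}·t³} · e^{−t²/2} dt − Σ_{j=0}^{M−1} (−1)^j · (6j)! / (288^j · (2j)! · (3j)!) · λ^{−3j} = O(λ^{−3M}); that is, the 1×1 Kontsevich matrix integral has asymptotic expansion 𝒜(λ^{−1}) = Σ_{j≥0} (−1)^j (6j)!/(288^j(2j)!(3j)!) λ^{−3j}. -/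
/-!
Expand `exp (i ε t³ / 6)` to order `2M` in its Taylor series; on the imaginary axis the
remainder is bounded by `|ε t³ / 6| ^ (2M) / (2M)!`, which is integrable against the Gaussian
weight and contributes `O(ε ^ (2M))`. Integrating the Taylor polynomial termwise, the odd
Gaussian moments vanish and the even ones, `∫ t^(2n) e^{-t²/2} = √(2π) (2n-1)‼`, produce the
coefficients of `𝒜`. Finally `ε = λ^{-3/2}` turns `ε ^ (2j)` into `λ ^ (-3j)`.
-/

open Filter Asymptotics MeasureTheory Real

open Complex (I)
open scoped Nat ComplexConjugate Complex

noncomputable def expTaylorRemainder (n : ℕ) (z : ℂ) : ℂ :=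
  cexp z - ∑ k ∈ Finset.range n, z ^ k / k !

lemma hasDerivAt_sum_range_pow_div_factorial (n : ℕ) (z : ℂ) :
    HasDerivAt (fun w : ℂ => ∑ k ∈ Finset.range (n + 1), w ^ k / k !)
      (∑ k ∈ Finset.range n, z ^ k / k !) z := by
  induction n with
  | zero => simpa using hasDerivAt_const z (1 : ℂ)
  | succ n ih =>
    have h := ih.fun_add ((hasDerivAt_pow (n + 1) z).div_const ((n + 1)! : ℂ))
    simp only [← Finset.sum_range_succ] at h
    refine h.congr_deriv ?_
    rw [Finset.sum_range_succ, Nat.factorial_succ, add_tsub_cancel_right, Nat.cast_mul,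
      mul_div_mul_left _ _ (Nat.cast_ne_zero.2 n.succ_ne_zero)]

lemma hasDerivAt_expTaylorRemainder_succ (n : ℕ) (z : ℂ) :
    HasDerivAt (expTaylorRemainder (n + 1)) (expTaylorRemainder n z) z :=
  (Complex.hasDerivAt_exp z).fun_sub (hasDerivAt_sum_range_pow_div_factorial n z)

lemma expTaylorRemainder_conj (n : ℕ) (z : ℂ) :
    expTaylorRemainder n (conj z) = conj (expTaylorRemainder n z) := by
  simp [expTaylorRemainder, map_sum, Complex.exp_conj]

lemma norm_expTaylorRemainder_succ_I_mul_le {n : ℕ}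
    (hn : ∀ y : ℝ, ‖expTaylorRemainder n (I * y)‖ ≤ |y| ^ n / n !) {x : ℝ}
    (hx : 0 ≤ x) :
    ‖expTaylorRemainder (n + 1) (I * x)‖ ≤ x ^ (n + 1) / (n + 1)! := by
  have hf (y : ℝ) : HasDerivAt (fun y : ℝ => expTaylorRemainder (n + 1) (I * y))
      (I * expTaylorRemainder n (I * y)) y := by
    have := (hasDerivAt_expTaylorRemainder_succ n (I * y)).comp (y : ℂ)
      ((hasDerivAt_id (y : ℂ)).const_mul I)
    simpa [mul_comm] using this.comp_ofReal
  have hB (y : ℝ) : HasDerivAt (fun y : ℝ => y ^ (n + 1) / (n + 1)!) (y ^ n / n !) y := by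
    refine ((hasDerivAt_pow (n + 1) y).div_const ((n + 1)! : ℝ)).congr_deriv ?_
    rw [Nat.factorial_succ, add_tsub_cancel_right, Nat.cast_mul,
      mul_div_mul_left _ _ (Nat.cast_ne_zero.2 n.succ_ne_zero)]
  refine image_norm_le_of_norm_deriv_right_le_deriv_boundary (a := 0) (b := x)
    (fun y _ => (hf y).continuousAt.continuousWithinAt) (fun y _ => (hf y).hasDerivWithinAt)
    ?_ hB (fun y hy => ?_) ⟨hx, le_rfl⟩
  · simp [expTaylorRemainder, Finset.sum_range_succ']
  · simpa [abs_of_nonneg hy.1] using hn y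

/-- Negative `x` reduces to `-x` by conjugation. -/
lemma norm_expTaylorRemainder_I_mul_le (n : ℕ) (x : ℝ) :
    ‖expTaylorRemainder n (I * x)‖ ≤ |x| ^ n / n ! := by
  induction n generalizing x with
  | zero => simp [expTaylorRemainder, Complex.norm_exp_I_mul_ofReal]
  | succ n ih =>
    rcases le_total 0 x with hx | hx
    · rw [abs_of_nonneg hx]
      exact norm_expTaylorRemainder_succ_I_mul_le ih hx
    · have hconj : I * x = conj (I * ((-x : ℝ) : ℂ)) := by simp
      rw [hconj, expTaylorRemainder_conj, Complex.norm_conj, abs_of_nonpos hx]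
      exact norm_expTaylorRemainder_succ_I_mul_le ih (neg_nonneg.2 hx)

lemma Nat.factorial_two_mul_eq_mul_doubleFactorial (n : ℕ) :
    (2 * n)! = 2 ^ n * n ! * (2 * n - 1)‼ := by
  cases n with
  | zero => rfl
  | succ n =>
    rw [show 2 * (n + 1) = 2 * n + 1 + 1 by ring, Nat.factorial_eq_mul_doubleFactorial,
      show 2 * n + 1 + 1 = 2 * (n + 1) by ring, Nat.doubleFactorial_two_mul]
    rfl

lemma integrable_pow_mul_exp_neg_sq_div_two (m : ℕ) :
    Integrable fun t : ℝ => t ^ m * rexp (-t ^ 2 / 2) := by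
  have h := integrable_rpow_mul_exp_neg_mul_sq (b := 1 / 2) (by norm_num)
    (s := m) (neg_one_lt_zero.trans_le m.cast_nonneg)
  refine h.congr (Eventually.of_forall fun t => ?_)
  simp only [rpow_natCast]
  ring_nf

lemma integral_pow_mul_exp_neg_sq_div_two_of_odd {m : ℕ} (hm : Odd m) :
    ∫ t : ℝ, t ^ m * rexp (-t ^ 2 / 2) = 0 := by
  have h := integral_neg_eq_self (fun t : ℝ => t ^ m * rexp (-t ^ 2 / 2)) volume
  simp only [hm.neg_pow, neg_sq, neg_mul, integral_neg] at h
  linarith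

lemma integral_pow_two_mul_mul_exp_neg_sq_div_two (n : ℕ) :
    ∫ t : ℝ, t ^ (2 * n) * rexp (-t ^ 2 / 2) = √(2 * π) * (2 * n - 1 : ℕ)‼ := by
  have habs (t : ℝ) : t ^ (2 * n) * rexp (-t ^ 2 / 2)
      = |t| ^ ((2 * n : ℕ) : ℝ) * rexp (-(1 / 2) * |t| ^ (2 : ℝ)) := by
    rw [rpow_natCast, rpow_two, (even_two_mul n).pow_abs, sq_abs]
    ring_nf
  have hGamma : Gamma ((((2 * n : ℕ) : ℝ) + 1) / 2) = (2 * n - 1 : ℕ)‼ * √π / 2 ^ n := by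
    rw [← Gamma_nat_add_half]
    push_cast
    ring_nf
  have hscale : (1 / 2 : ℝ) ^ (-(((2 * n : ℕ) : ℝ) + 1) / 2) = 2 ^ n * √2 := by
    rw [one_div, inv_rpow zero_le_two, ← rpow_neg zero_le_two, neg_div, neg_neg,
      show (((2 * n : ℕ) : ℝ) + 1) / 2 = n + 1 / 2 by push_cast; ring,
      rpow_add zero_lt_two, rpow_natCast, ← sqrt_eq_rpow]
  simp_rw [habs]
  rw [integral_comp_abs (f := fun t => t ^ ((2 * n : ℕ) : ℝ) * rexp (-(1 / 2) * t ^ (2 : ℝ))),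
    integral_rpow_mul_exp_neg_mul_rpow two_pos (neg_one_lt_zero.trans_le (Nat.cast_nonneg _))
      one_half_pos, hGamma, hscale, sqrt_mul zero_le_two]
  field_simp

lemma cexp_neg_sq_div_two_eq_ofReal (t : ℝ) :
    cexp (-(t : ℂ) ^ 2 / 2) = (rexp (-t ^ 2 / 2) : ℂ) := by
  push_cast
  rfl

lemma integral_ofReal_pow_mul_cexp_neg_sq_div_two (m : ℕ) :
    ∫ t : ℝ, (t : ℂ) ^ m * cexp (-(t : ℂ) ^ 2 / 2)
      = ((∫ t : ℝ, t ^ m * rexp (-t ^ 2 / 2) : ℝ) : ℂ) := by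
  simp_rw [cexp_neg_sq_div_two_eq_ofReal, ← Complex.ofReal_pow, ← Complex.ofReal_mul]
  exact integral_ofReal

lemma integrable_ofReal_pow_mul_cexp_neg_sq_div_two (m : ℕ) :
    Integrable fun t : ℝ => (t : ℂ) ^ m * cexp (-(t : ℂ) ^ 2 / 2) := by
  simp_rw [cexp_neg_sq_div_two_eq_ofReal, ← Complex.ofReal_pow, ← Complex.ofReal_mul]
  exact (integrable_pow_mul_exp_neg_sq_div_two m).ofReal

noncomputable def kontsevichIntegral (ε : ℝ) : ℂ :=
  ∫ t : ℝ, cexp (I / 6 * ε * t ^ 3) * cexp (-(t : ℂ) ^ 2 / 2)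

noncomputable def kontsevichCoeff (j : ℕ) : ℂ :=
  (-1) ^ j * ((6 * j).factorial : ℂ) / (288 ^ j * (2 * j).factorial * (3 * j).factorial)

/-- The `2j`-th Taylor coefficient of `exp (i ε t³ / 6)` times the Gaussian moment `(6j - 1)‼`
of `t ^ (6j)`; `288 = 6² · 2³` comes from `(6j)! = 2^{3j} (3j)! (6j-1)‼`. -/
lemma kontsevichCoeff_eq_doubleFactorial (j : ℕ) :
    kontsevichCoeff j = (I / 6) ^ (2 * j) / (2 * j)! * (6 * j - 1 : ℕ)‼ := by
  have h := Nat.factorial_two_mul_eq_mul_doubleFactorial (3 * j)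
  rw [show 2 * (3 * j) = 6 * j by ring] at h
  have hI : (I / 6) ^ (2 * j) = (-1) ^ j / 36 ^ j := by
    rw [pow_mul, show (I / 6) ^ 2 = -1 / 36 by rw [div_pow, Complex.I_sq]; norm_num, div_pow]
  have h3j : ((3 * j)! : ℂ) ≠ 0 := Nat.cast_ne_zero.2 (Nat.factorial_ne_zero _)
  rw [kontsevichCoeff, h, hI]
  push_cast
  rw [show (288 : ℂ) ^ j = 36 ^ j * 2 ^ (3 * j) by rw [pow_mul, ← mul_pow]; norm_num]
  field_simp

lemma norm_kontsevichIntegrand_sub_taylor_le (n : ℕ) (ε t : ℝ) :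
    ‖cexp (I / 6 * ε * t ^ 3) * cexp (-(t : ℂ) ^ 2 / 2)
        - ∑ k ∈ Finset.range n,
            (I * ε / 6) ^ k / k ! * ((t : ℂ) ^ (3 * k) * cexp (-(t : ℂ) ^ 2 / 2))‖
      ≤ |ε| ^ n / (6 ^ n * n !) * (|t| ^ (3 * n) * rexp (-t ^ 2 / 2)) := by
  have hphase : I / 6 * ε * t ^ 3 = I * ((ε * t ^ 3 / 6 : ℝ) : ℂ) := by push_cast; ring
  have hterm (k : ℕ) : (I * ε / 6) ^ k / k ! * ((t : ℂ) ^ (3 * k) * cexp (-(t : ℂ) ^ 2 / 2))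
      = (I * ((ε * t ^ 3 / 6 : ℝ) : ℂ)) ^ k / k ! * cexp (-(t : ℂ) ^ 2 / 2) := by
    push_cast; ring
  have hpow : |ε * t ^ 3 / 6| ^ n = |ε| ^ n / 6 ^ n * |t| ^ (3 * n) := by
    rw [abs_div, abs_mul, abs_pow, div_pow, mul_pow, ← pow_mul,
      abs_of_pos (by norm_num : (0 : ℝ) < 6)]
    ring
  simp_rw [hphase, hterm, ← Finset.sum_mul, ← sub_mul]
  rw [norm_mul, cexp_neg_sq_div_two_eq_ofReal, Complex.norm_real, norm_of_nonneg (exp_nonneg _)]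
  calc _ ≤ |ε * t ^ 3 / 6| ^ n / n ! * rexp (-t ^ 2 / 2) := by
        gcongr; exact norm_expTaylorRemainder_I_mul_le n _
    _ = _ := by rw [hpow]; ring

lemma Finset.sum_range_two_mul {β : Type*} [AddCommMonoid β] (f : ℕ → β) (n : ℕ) :
    ∑ k ∈ range (2 * n), f k = ∑ j ∈ range n, (f (2 * j) + f (2 * j + 1)) := by
  induction n with
  | zero => simp
  | succ n ih =>
    rw [show 2 * (n + 1) = 2 * n + 1 + 1 by ring, sum_range_succ, sum_range_succ, ih,
      sum_range_succ, add_assoc]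

lemma integral_kontsevichTaylor (M : ℕ) (ε : ℝ) :
    ∫ t : ℝ, ∑ k ∈ Finset.range (2 * M),
        (I * ε / 6) ^ k / k ! * ((t : ℂ) ^ (3 * k) * cexp (-(t : ℂ) ^ 2 / 2))
      = √(2 * π) * ∑ j ∈ Finset.range M, kontsevichCoeff j * (ε : ℂ) ^ (2 * j) := by
  rw [integral_finsetSum _ fun k _ =>
    (integrable_ofReal_pow_mul_cexp_neg_sq_div_two (3 * k)).const_mul _]
  simp_rw [integral_const_mul, integral_ofReal_pow_mul_cexp_neg_sq_div_two]
  rw [Finset.sum_range_two_mul, Finset.mul_sum]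
  refine Finset.sum_congr rfl fun j _ => ?_
  rw [integral_pow_mul_exp_neg_sq_div_two_of_odd (m := 3 * (2 * j + 1)) ⟨3 * j + 1, by ring⟩,
    show 3 * (2 * j) = 2 * (3 * j) by ring, integral_pow_two_mul_mul_exp_neg_sq_div_two,
    show 2 * (3 * j) = 6 * j by ring, kontsevichCoeff_eq_doubleFactorial]
  push_cast
  ring

lemma integrable_kontsevichIntegrand (ε : ℝ) :
    Integrable fun t : ℝ => cexp (I / 6 * ε * t ^ 3) * cexp (-(t : ℂ) ^ 2 / 2) := by
  refine (integrable_pow_mul_exp_neg_sq_div_two 0).mono' (by fun_prop)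
    (Eventually.of_forall fun t => ?_)
  have hphase : I / 6 * ε * t ^ 3 = ((ε * t ^ 3 / 6 : ℝ) : ℂ) * I := by push_cast; ring
  rw [norm_mul, hphase, Complex.norm_exp_ofReal_mul_I, cexp_neg_sq_div_two_eq_ofReal,
    Complex.norm_real, norm_of_nonneg (exp_nonneg _), one_mul, pow_zero, one_mul]

lemma norm_kontsevichIntegral_sub_sum_le (M : ℕ) (ε : ℝ) :
    ‖kontsevichIntegral ε
        - √(2 * π) * ∑ j ∈ Finset.range M, kontsevichCoeff j * (ε : ℂ) ^ (2 * j)‖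
      ≤ (∫ t : ℝ, t ^ (6 * M) * rexp (-t ^ 2 / 2)) / (6 ^ (2 * M) * (2 * M)!)
          * ε ^ (2 * M) := by
  have htaylor : Integrable fun t : ℝ => ∑ k ∈ Finset.range (2 * M),
      (I * ε / 6) ^ k / k ! * ((t : ℂ) ^ (3 * k) * cexp (-(t : ℂ) ^ 2 / 2)) :=
    integrable_finsetSum _ fun k _ =>
      (integrable_ofReal_pow_mul_cexp_neg_sq_div_two (3 * k)).const_mul _
  have hbound (t : ℝ) := norm_kontsevichIntegrand_sub_taylor_le (2 * M) ε t
  simp only [(even_two_mul M).pow_abs, show 3 * (2 * M) = 6 * M by ring,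
    (show Even (6 * M) from ⟨3 * M, by ring⟩).pow_abs] at hbound
  rw [kontsevichIntegral, ← integral_kontsevichTaylor, ← integral_sub
    (integrable_kontsevichIntegrand ε) htaylor]
  refine (norm_integral_le_of_norm_le
    ((integrable_pow_mul_exp_neg_sq_div_two (6 * M)).const_mul _)
    (Eventually.of_forall hbound)).trans_eq ?_
  rw [integral_const_mul]
  ring

lemma kontsevichIntegral_sub_sum_isBigO (M : ℕ) :
    (fun ε : ℝ => (1 / Real.sqrt (2 * π) : ℂ) * kontsevichIntegral ε
        - ∑ j ∈ Finset.range M, kontsevichCoeff j * (ε : ℂ) ^ (2 * j))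
      =O[⊤] fun ε : ℝ => ε ^ (2 * M) := by
  have hsqrt : (0 : ℝ) < √(2 * π) := by positivity
  refine isBigO_top.2 ⟨(∫ t : ℝ, t ^ (6 * M) * rexp (-t ^ 2 / 2)) /
    (6 ^ (2 * M) * (2 * M)!) / √(2 * π), fun ε => ?_⟩
  have hfactor : (1 / √(2 * π) : ℂ) * kontsevichIntegral ε
        - ∑ j ∈ Finset.range M, kontsevichCoeff j * (ε : ℂ) ^ (2 * j)
      = (1 / √(2 * π) : ℂ) * (kontsevichIntegral ε
        - √(2 * π) * ∑ j ∈ Finset.range M, kontsevichCoeff j * (ε : ℂ) ^ (2 * j)) := by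
    field_simp
  rw [hfactor, norm_mul, norm_pow, Real.norm_eq_abs, (even_two_mul M).pow_abs, norm_div,
    norm_one, Complex.norm_real, norm_of_nonneg hsqrt.le, div_mul_eq_mul_div, one_mul,
    div_mul_eq_mul_div]
  gcongr
  exact norm_kontsevichIntegral_sub_sum_le M ε

lemma rpow_neg_three_div_two_pow_two_mul {x : ℝ} (hx : 0 ≤ x) (j : ℕ) :
    (x ^ (-(3 : ℝ) / 2)) ^ (2 * j) = x ^ (-(3 * (j : ℝ))) := by
  rw [← rpow_natCast, ← rpow_mul hx]
  push_cast
  ring_nf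

theorem kontsevich_N1_expansion (M : ℕ) :
    (fun lam : ℝ =>
        (1 / Real.sqrt (2 * π) : ℂ) *
          (∫ t : ℝ, Complex.exp (Complex.I / 6 * ((lam ^ (-(3:ℝ)/2) : ℝ) : ℂ) * (t:ℂ) ^ 3) *
            Complex.exp (-(t:ℂ) ^ 2 / 2)) -
          ∑ j ∈ Finset.range M, ((-1) ^ j * ((6 * j).factorial : ℂ) /
            (288 ^ j * (2 * j).factorial * (3 * j).factorial) * ((lam : ℂ) ^ (3 * j))⁻¹))
      =O[atTop]
    (fun lam : ℝ => lam ^ (-(3 * (M:ℝ)))) := by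
  refine ((kontsevichIntegral_sub_sum_isBigO M).comp_tendsto
    (tendsto_top (f := fun lam : ℝ => lam ^ (-(3 : ℝ) / 2)))).congr' ?_ ?_
  all_goals filter_upwards [eventually_ge_atTop 0] with lam hlam
  · refine congrArg _ (Finset.sum_congr rfl fun j _ => congrArg _ ?_)
    rw [← Complex.ofReal_pow, rpow_neg_three_div_two_pow_two_mul hlam, rpow_neg hlam]
    norm_cast
  · exact rpow_neg_three_div_two_pow_two_mul hlam M
end

section
/- In ℚ[[x]], let G(x) = Σ_{j≥0} (6j)!/(288^j (2j)!(3j)!) x^{3j} (that is, G(x) = 𝒜(−x)). Then there is a unique formal power series C(x) ∈ ℚ[[x]] satisfying −x⁴·C'(x) − (3/2)·x³·C(x) + C(x) = G(x), and it is given by C(x) = 1 + Σ_{n≥1} d_n x^{3n}, where d_n = Σ_{i=0}^{n} 3^i · (6(n−i))!/(288^{n−i}·(2(n−i))!·(3(n−i))!) · Π_{k=1}^{i} (n + 1/2 − k). -/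
open PowerSeries

/-- The coefficient `(6j)!/(288^j (2j)! (3j)!)` of `x^{3j}` in `G(x) = 𝒜(−x)`. -/
noncomputable def gCoeff (j : ℕ) : ℚ :=
  ((6 * j).factorial : ℚ) / (288 ^ j * (2 * j).factorial * (3 * j).factorial)

/-- `G(x) = Σ_{j≥0} (6j)!/(288^j (2j)!(3j)!) x^{3j}` as a formal power series over ℚ. -/
noncomputable def Gser : PowerSeries ℚ :=
  PowerSeries.mk fun n => if 3 ∣ n then gCoeff (n / 3) else 0

/-- `d_n = Σ_{i=0}^{n} 3^i · g_{n−i} · Π_{k=1}^{i} (n + 1/2 − k)`. -/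
noncomputable def dCoeff (n : ℕ) : ℚ :=
  ∑ i ∈ Finset.range (n + 1), 3 ^ i * gCoeff (n - i) *
    ∏ k ∈ Finset.range i, ((n : ℚ) + 1 / 2 - (k + 1))

/-- `D(x) = 1 + Σ_{n≥1} d_n x^{3n}` as a formal power series over ℚ. -/
noncomputable def Dser : PowerSeries ℚ :=
  PowerSeries.mk fun n => if 3 ∣ n then dCoeff (n / 3) else 0

/-!
The left-hand side `f − x⁴f' − c·x³f` of the equation acts on coefficients by
`[x^(n+3)] ↦ [x^(n+3)] f − (n + c)·[x^n] f` and fixes `[x^n]` for `n < 3`, so it is injective.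
For `f = D` this is `d_{m+1} − (3m + 3/2) d_m`, and the closed form of `d_n` satisfies
`d_{m+1} = g_{m+1} + (3m + 3/2) d_m` by splitting off the `i = 0` term.
-/

namespace PowerSeries

variable {R : Type*} [CommRing R]

theorem coeff_X_pow_succ_mul_derivative (f : R⟦X⟧) (n k : ℕ) :
    coeff (n + k) (X ^ (k + 1) * d⁄dX R f) = n * coeff n f := by
  rw [coeff_X_pow_mul']
  rcases n with _ | m
  · simp
  · rw [if_pos (by omega), show m + 1 + k - (k + 1) = m by omega, coeff_derivative]
    push_cast
    ring

noncomputable def odeOp (c : R) (f : R⟦X⟧) : R⟦X⟧ :=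
  -X ^ 4 * d⁄dX R f - C c * X ^ 3 * f + f

theorem coeff_odeOp_of_lt (c : R) (f : R⟦X⟧) {n : ℕ} (hn : n < 3) :
    coeff n (odeOp c f) = coeff n f := by
  simp [odeOp, mul_assoc, coeff_X_pow_mul', show ¬ 4 ≤ n by omega, show ¬ 3 ≤ n by omega]

theorem coeff_odeOp_add_three (c : R) (f : R⟦X⟧) (n : ℕ) :
    coeff (n + 3) (odeOp c f) = coeff (n + 3) f - (n + c) * coeff n f := by
  simp only [odeOp, map_add, map_sub, neg_mul, map_neg, mul_assoc, coeff_C_mul, coeff_X_pow_mul,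
    coeff_X_pow_succ_mul_derivative]
  rw [add_mul]
  abel

theorem odeOp_injective (c : R) : Function.Injective (odeOp c) := by
  intro f g hfg
  ext n
  induction n using Nat.strong_induction_on with
  | _ n ih =>
    rcases Nat.lt_or_ge n 3 with hn | hn
    · rw [← coeff_odeOp_of_lt c f hn, ← coeff_odeOp_of_lt c g hn, hfg]
    · obtain ⟨m, rfl⟩ := Nat.exists_eq_add_of_le' hn
      have hm := congrArg (coeff (m + 3)) hfg
      rw [coeff_odeOp_add_three, coeff_odeOp_add_three, ih m (by omega)] at hm
      exact sub_left_inj.mp hm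

end PowerSeries

theorem dCoeff_succ (m : ℕ) :
    dCoeff (m + 1) = gCoeff (m + 1) + (3 * m + 3 / 2) * dCoeff m := by
  rw [dCoeff, Finset.sum_range_succ', dCoeff, Finset.mul_sum, add_comm]
  simp only [pow_zero, Nat.sub_zero, Finset.prod_range_zero, one_mul, mul_one]
  congr 1
  refine Finset.sum_congr rfl fun i _ => ?_
  rw [Finset.prod_range_succ', show m + 1 - (i + 1) = m - i by omega]
  push_cast
  rw [Finset.prod_congr rfl fun (k : ℕ) _ =>
    show (m : ℚ) + 1 + 1 / 2 - ((k : ℚ) + 1 + 1) = m + 1 / 2 - (k + 1) by ring]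
  ring

theorem odeOp_Dser : odeOp (3 / 2) Dser = Gser := by
  ext n
  rcases Nat.lt_or_ge n 3 with hn | hn
  · rw [coeff_odeOp_of_lt _ _ hn]
    interval_cases n <;> simp [Dser, Gser, dCoeff]
  · obtain ⟨m, rfl⟩ := Nat.exists_eq_add_of_le' hn
    rw [coeff_odeOp_add_three]
    simp only [Dser, Gser, coeff_mk, Nat.dvd_add_self_right]
    split_ifs with h
    · obtain ⟨q, rfl⟩ := h
      rw [show (3 * q + 3) / 3 = q + 1 by omega, Nat.mul_div_cancel_left q (by norm_num),
        dCoeff_succ]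
      push_cast
      ring
    · simp

theorem D_unique_solution :
    (-X ^ 4 * PowerSeries.derivative ℚ Dser - C (3 / 2 : ℚ) * X ^ 3 * Dser + Dser = Gser) ∧
    ∀ f : PowerSeries ℚ,
      (-X ^ 4 * PowerSeries.derivative ℚ f - C (3 / 2 : ℚ) * X ^ 3 * f + f = Gser) → f = Dser :=
  ⟨odeOp_Dser, fun _ hf => odeOp_injective (3 / 2 : ℚ) (hf.trans odeOp_Dser.symm)⟩
end

section
/- The Airy function is bounded on ℝ: defining Ai(x) = lim_{R→∞} ∫₀^R cos(t³/3 + x·t) dt, there exists a constant M such that |Ai(x)| ≤ M for all real x. -/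
/-!
Van der Corput's first-derivative test: if `φ'' ≥ 0` and `|φ'| ≥ l` on `[a, b]`, then
`|∫_a^b cos φ| ≤ 4 / l`, by integrating by parts against `(sin ∘ φ)' = φ' · cos ∘ φ` with the
antitone weight `1 / φ'`. For the Airy phase `φ(t) = t³/3 + xt` we have `φ' = t² + x` and
`φ'' = 2t ≥ 0` on `[0, ∞)`. Outside the window `√(-x-1) ≤ t ≤ √(1-x)`, of length at most `2`,
`|φ'| ≥ 1`, so every partial integral `∫_0^R` is bounded by `4 + 2 + 4` uniformly in `x`; and for
`R ≥ N` the tail `∫_N^R` is at most `4 / (N² + x)`, so the partial integrals converge.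
-/

open Filter intervalIntegral

open Set MeasureTheory Real Topology

theorem intervalIntegrable_deriv_of_nonpos {u u' : ℝ → ℝ} {a b : ℝ} (hab : a ≤ b)
    (hu : ∀ t ∈ Icc a b, HasDerivAt u (u' t) t) (hu' : ∀ t ∈ Icc a b, u' t ≤ 0) :
    IntervalIntegrable u' volume a b := by
  have h := intervalIntegrable_deriv_of_nonneg (g := fun t => -u t) (g' := fun t => -u' t)
    (by rw [uIcc_of_le hab]; exact fun t ht => (hu t ht).continuousAt.continuousWithinAt.neg)
    (by
      rw [min_eq_left hab, max_eq_right hab]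
      exact fun t ht => (hu t (Ioo_subset_Icc_self ht)).neg)
    (by
      rw [min_eq_left hab, max_eq_right hab]
      exact fun t ht => neg_nonneg.2 (hu' t (Ioo_subset_Icc_self ht)))
  simpa only [Pi.neg_def, neg_neg] using h.neg

theorem abs_integral_deriv_mul_le_of_deriv_nonpos {u u' v : ℝ → ℝ} {a b : ℝ} (hab : a ≤ b)
    (hu : ∀ t ∈ Icc a b, HasDerivAt u (u' t) t) (hu' : ∀ t ∈ Icc a b, u' t ≤ 0)
    (hv : ContinuousOn v (Icc a b)) (hv_le : ∀ t ∈ Icc a b, |v t| ≤ 1) :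
    |∫ t in a..b, u' t * v t| ≤ u a - u b := by
  have hint := intervalIntegrable_deriv_of_nonpos hab hu hu'
  calc |∫ t in a..b, u' t * v t|
      ≤ ∫ t in a..b, |u' t * v t| := abs_integral_le_integral_abs hab
    _ ≤ ∫ t in a..b, -u' t := by
      refine integral_mono_on hab (hint.mul_continuousOn (uIcc_of_le hab ▸ hv)).abs hint.neg
        fun t ht => ?_
      rw [abs_mul, ← abs_of_nonpos (hu' t ht)]
      exact mul_le_of_le_one_right (abs_nonneg _) (hv_le t ht)
    _ = u a - u b := by
      rw [intervalIntegral.integral_neg,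
        integral_eq_sub_of_hasDerivAt (uIcc_of_le hab ▸ hu) hint, neg_sub]

theorem abs_integral_cos_le_of_le_abs_deriv {φ φ' φ'' : ℝ → ℝ} {a b l : ℝ} (hab : a ≤ b)
    (hl : 0 < l) (hφ : ∀ t ∈ Icc a b, HasDerivAt φ (φ' t) t)
    (hφ' : ∀ t ∈ Icc a b, HasDerivAt φ' (φ'' t) t) (hφ'' : ∀ t ∈ Icc a b, 0 ≤ φ'' t)
    (hl_le : ∀ t ∈ Ioo a b, l ≤ |φ' t|) :
    |∫ t in a..b, cos (φ t)| ≤ 4 / l := by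
  rcases hab.eq_or_lt with rfl | hlt
  · simp only [integral_same, abs_zero]; positivity
  have hl_le' : ∀ t ∈ Icc a b, l ≤ |φ' t| := fun t ht =>
    ContinuousWithinAt.closure_le (f := fun _ => l) (g := fun s => |φ' s|)
      (by rwa [closure_Ioo hlt.ne]) continuousWithinAt_const
      (hφ' t ht).continuousAt.continuousWithinAt.abs hl_le
  have hne : ∀ t ∈ Icc a b, φ' t ≠ 0 := fun t ht => abs_pos.1 (hl.trans_le (hl_le' t ht))
  set u : ℝ → ℝ := fun t => (φ' t)⁻¹
  set v : ℝ → ℝ := fun t => sin (φ t)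
  have hu : ∀ t ∈ Icc a b, HasDerivAt u (-φ'' t / φ' t ^ 2) t := fun t ht =>
    (hφ' t ht).inv (hne t ht)
  have hu' : ∀ t ∈ Icc a b, -φ'' t / φ' t ^ 2 ≤ 0 := fun t ht =>
    div_nonpos_of_nonpos_of_nonneg (neg_nonpos.2 (hφ'' t ht)) (sq_nonneg _)
  have hv : ∀ t ∈ Icc a b, HasDerivAt v (cos (φ t) * φ' t) t := fun t ht => (hφ t ht).sin
  have hv_cont : ContinuousOn v (Icc a b) := fun t ht => (hv t ht).continuousAt.continuousWithinAt
  have hv'_int : IntervalIntegrable (fun t => cos (φ t) * φ' t) volume a b := by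
    refine ContinuousOn.intervalIntegrable fun t ht => ?_
    rw [uIcc_of_le hab] at ht
    exact ((continuous_cos.continuousAt.comp (hφ t ht).continuousAt).mul
      (hφ' t ht).continuousAt).continuousWithinAt
  have hu_le : ∀ t ∈ Icc a b, |u t| ≤ l⁻¹ := fun t ht => by
    simpa only [u, abs_inv] using inv_anti₀ hl (hl_le' t ht)
  have huv_le : ∀ t ∈ Icc a b, |u t * v t| ≤ l⁻¹ := fun t ht => by
    rw [abs_mul]
    exact (mul_le_of_le_one_right (abs_nonneg _) (abs_sin_le_one _)).trans (hu_le t ht)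
  have hrem := abs_integral_deriv_mul_le_of_deriv_nonpos hab hu hu' hv_cont
    fun t _ => abs_sin_le_one _
  have hcos : ∫ t in a..b, cos (φ t) = ∫ t in a..b, u t * (cos (φ t) * φ' t) :=
    integral_congr fun t ht => by
      rw [uIcc_of_le hab] at ht
      simp only [u]
      field_simp [hne t ht]
  rw [hcos, integral_mul_deriv_eq_deriv_mul (uIcc_of_le hab ▸ hu) (uIcc_of_le hab ▸ hv)
    (intervalIntegrable_deriv_of_nonpos hab hu hu') hv'_int, div_eq_mul_inv]
  have ha := abs_le.1 (huv_le a (left_mem_Icc.2 hab))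
  have hb := abs_le.1 (huv_le b (right_mem_Icc.2 hab))
  have hua := abs_le.1 (hu_le a (left_mem_Icc.2 hab))
  have hub := abs_le.1 (hu_le b (right_mem_Icc.2 hab))
  have hr := abs_le.1 hrem
  exact abs_le.2 ⟨by linarith, by linarith⟩

theorem abs_integral_cos_le_sub {φ : ℝ → ℝ} {a b : ℝ} (hab : a ≤ b) :
    |∫ t in a..b, cos (φ t)| ≤ b - a := by
  simpa [abs_of_nonneg (sub_nonneg.2 hab)] using
    norm_integral_le_of_norm_le_const (f := fun t => cos (φ t)) (a := a) (b := b) (C := 1)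
      fun t _ => abs_cos_le_one (φ t)

theorem airy_intervalIntegrable (x a b : ℝ) :
    IntervalIntegrable (fun t => cos (t ^ 3 / 3 + x * t)) volume a b :=
  (by fun_prop : Continuous fun t => cos (t ^ 3 / 3 + x * t)).intervalIntegrable a b

theorem abs_integral_airy_le_of_le_abs {x a b l : ℝ} (ha : 0 ≤ a) (hab : a ≤ b) (hl : 0 < l)
    (hl_le : ∀ t ∈ Ioo a b, l ≤ |t ^ 2 + x|) :
    |∫ t in a..b, cos (t ^ 3 / 3 + x * t)| ≤ 4 / l := by
  refine abs_integral_cos_le_of_le_abs_deriv (φ := fun t => t ^ 3 / 3 + x * t)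
    (φ' := fun t => t ^ 2 + x) (φ'' := fun t => 2 * t) hab hl
    (fun t _ => ?_) (fun t _ => ?_) (fun t ht => by linarith [ht.1]) hl_le
  · have h : HasDerivAt (fun s : ℝ => s ^ 3 / 3 + x * s) ((3 : ℕ) * t ^ 2 / 3 + x * 1) t :=
      ((hasDerivAt_pow 3 t).div_const 3).add ((hasDerivAt_id t).const_mul x)
    exact h.congr_deriv (by push_cast; ring)
  · simpa using (hasDerivAt_pow 2 t).add_const x

theorem abs_integral_airy_le_ten (x : ℝ) {R : ℝ} (hR : 0 ≤ R) :
    |∫ t in (0:ℝ)..R, cos (t ^ 3 / 3 + x * t)| ≤ 10 := by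
  set c := √(-x - 1)
  set d := √(1 - x)
  have hcd : c ≤ d := sqrt_le_sqrt (by linarith)
  have hdc : d ≤ c + 2 := by
    rw [sqrt_le_iff]
    refine ⟨by positivity, ?_⟩
    nlinarith [sq_sqrt' (x := -x - 1), le_max_left (-x - 1) 0, sqrt_nonneg (-x - 1)]
  set p := min R c
  set q := min R d
  have hp : 0 ≤ p := le_min hR (sqrt_nonneg _)
  have hpq : p ≤ q := min_le_min_left R hcd
  have hqp : q - p ≤ 2 := by
    simp only [p, q, min_def]
    split_ifs <;> linarith
  have hleft : |∫ t in (0:ℝ)..p, cos (t ^ 3 / 3 + x * t)| ≤ 4 := by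
    refine (div_one (4 : ℝ)) ▸ abs_integral_airy_le_of_le_abs le_rfl hp one_pos fun t ht => ?_
    have : t ^ 2 < -x - 1 := (lt_sqrt ht.1.le).1 (ht.2.trans_le (min_le_right _ _))
    exact le_abs.2 (Or.inr (by linarith))
  have hmid : |∫ t in p..q, cos (t ^ 3 / 3 + x * t)| ≤ 2 :=
    (abs_integral_cos_le_sub hpq).trans hqp
  have hright : |∫ t in q..R, cos (t ^ 3 / 3 + x * t)| ≤ 4 := by
    refine (div_one (4 : ℝ)) ▸ abs_integral_airy_le_of_le_abs (hp.trans hpq) (min_le_left _ _)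
      one_pos fun t ht => ?_
    have hdt : d < t := (min_lt_iff.1 ht.1).resolve_left ht.2.le.not_gt
    have : 1 - x < t ^ 2 := (sqrt_lt' ((sqrt_nonneg _).trans_lt hdt)).1 hdt
    exact le_abs.2 (Or.inl (by linarith))
  rw [← integral_add_adjacent_intervals (airy_intervalIntegrable x 0 q)
      (airy_intervalIntegrable x q R),
    ← integral_add_adjacent_intervals (airy_intervalIntegrable x 0 p)
      (airy_intervalIntegrable x p q)]
  have := abs_le.1 hleft
  have := abs_le.1 hmid
  have := abs_le.1 hright
  exact abs_le.2 ⟨by linarith, by linarith⟩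

theorem exists_tendsto_airy_integral (x : ℝ) :
    ∃ L, Tendsto (fun R => ∫ t in (0:ℝ)..R, cos (t ^ 3 / 3 + x * t)) atTop (𝓝 L) := by
  refine cauchySeq_tendsto_of_complete (Metric.cauchySeq_iff'.2 fun ε hε => ?_)
  have hsq : Tendsto (fun N : ℝ => N ^ 2 + x) atTop atTop :=
    tendsto_atTop_add_const_right _ x (tendsto_pow_atTop two_ne_zero)
  obtain ⟨N, hNε, hNx, hN⟩ := ((tendsto_const_nhds.div_atTop hsq).eventually (gt_mem_nhds hε)
    |>.and <| (hsq.eventually_gt_atTop 0).and (eventually_ge_atTop 0)).exists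
  refine ⟨N, fun R hR => ?_⟩
  rw [dist_eq, integral_interval_sub_left (airy_intervalIntegrable x 0 R)
    (airy_intervalIntegrable x 0 N)]
  refine (abs_integral_airy_le_of_le_abs hN hR hNx fun t ht => ?_).trans_lt hNε
  exact (by nlinarith [ht.1] : N ^ 2 + x ≤ t ^ 2 + x).trans (le_abs_self _)

theorem airy_bounded : ∃ M : ℝ, ∀ x : ℝ, |Ai x| ≤ M := by
  refine ⟨10, fun x => ?_⟩
  obtain ⟨L, hL⟩ := exists_tendsto_airy_integral x
  rw [Ai, hL.limUnder_eq]
  exact le_of_tendsto hL.abs (eventually_atTop.2 ⟨0, fun R hR => abs_integral_airy_le_ten x hR⟩)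
end
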